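/- arXiv:2310.18618 — 7 statements merged into one kernel-verified Lean document; each statement's English description precedes it below -/
import Mathlib

section
/- Under the GSVD setup, for every λ > 0 the matrix (L_M A)ᵀ L_M A + λ L_Nᵀ L_N is invertible, and the Tikhonov regularized solution x_λ = [(L_M A)ᵀ L_M A + λ L_Nᵀ L_N]^{-1} (L_M A)ᵀ L_M b satisfies x_λ = Σ_{i=1}^{r} (γ_i²/(γ_i² + λ)) · ((u_{A,i}ᵀ L_M b)/σ_i) · z_i, where γ_i = σ_i. -/
/-! With `W = Z⁻¹`, the condition `Zᵀ N⁻¹ Z = 1` says `L_Nᵀ L_N = N⁻¹ = Wᵀ W`, and `U_A` is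
orthogonal, so the Tikhonov normal matrix is congruent to a diagonal one:
`(L_M A)ᵀ L_M A + λ L_Nᵀ L_N = Wᵀ (Σ_Aᵀ Σ_A + λ I) W`, with diagonal entries `σ_i² + λ` for
`i < r` and `λ` beyond, all positive. Hence `x_λ = Z (Σ_Aᵀ Σ_A + λ I)⁻¹ Σ_Aᵀ U_Aᵀ L_M b`, whose
`i`-th coordinate in the basis `z_i` is `σ_i / (σ_i² + λ) · u_{A,i}ᵀ L_M b`. -/

open Matrix

lemma Fin.sum_univ_eq_sum_castLE {M : Type*} [AddCommMonoid M] {r n : ℕ} (h : r ≤ n)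
    {f : Fin n → M} (hf : ∀ j : Fin n, r ≤ (j : ℕ) → f j = 0) :
    ∑ j, f j = ∑ i : Fin r, f (Fin.castLE h i) := by
  refine .trans ?_ (Finset.sum_map _ (Fin.castLEEmb h) f)
  refine (Finset.sum_subset (Finset.subset_univ _) fun j _ hj => hf j ?_).symm
  by_contra! hjr
  exact hj (Finset.mem_map.mpr ⟨⟨j, hjr⟩, Finset.mem_univ _, rfl⟩)

namespace Matrix

section Congruence

variable {n R : Type*} [Fintype n] [DecidableEq n] [CommRing R] {Z P : Matrix n n R}

lemma isUnit_det_of_transpose_mul_mul_eq_one (h : Zᵀ * P * Z = 1) : IsUnit Z.det := by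
  have hdet := congrArg det h
  rw [det_mul, det_mul, det_transpose, det_one] at hdet
  exact IsUnit.of_mul_eq_one (P.det * Z.det) (by rw [← hdet]; ring)

lemma eq_transpose_inv_mul_inv_of_transpose_mul_mul_eq_one (h : Zᵀ * P * Z = 1) :
    P = Z⁻¹ᵀ * Z⁻¹ := by
  have hZ := isUnit_det_of_transpose_mul_mul_eq_one h
  calc P = (Z * Z⁻¹)ᵀ * P * (Z * Z⁻¹) := by
        rw [mul_nonsing_inv _ hZ, transpose_one, Matrix.one_mul, Matrix.mul_one]
    _ = Z⁻¹ᵀ * (Zᵀ * P * Z) * Z⁻¹ := by simp only [transpose_mul, Matrix.mul_assoc]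
    _ = Z⁻¹ᵀ * Z⁻¹ := by rw [h, Matrix.mul_one]

end Congruence

section Tikhonov

variable {m n 𝕜 : Type*} [Fintype m] [Fintype n] [DecidableEq m] [DecidableEq n] [Field 𝕜]
  {K S : Matrix m n 𝕜} {U : Matrix m m 𝕜} {L Z : Matrix n n 𝕜} {c : 𝕜} {d : n → 𝕜}

lemma tikhonov_normal_eq (hK : K = U * S * Z⁻¹) (hU : Uᵀ * U = 1)
    (hL : Lᵀ * L = Z⁻¹ᵀ * Z⁻¹) (hS : Sᵀ * S + c • 1 = diagonal d) :
    Kᵀ * K + c • (Lᵀ * L) = Z⁻¹ᵀ * diagonal d * Z⁻¹ := by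
  have hKK : Kᵀ * K = Z⁻¹ᵀ * (Sᵀ * S) * Z⁻¹ := by
    calc Kᵀ * K = Z⁻¹ᵀ * (Sᵀ * ((Uᵀ * U) * S)) * Z⁻¹ := by
          simp only [hK, transpose_mul, Matrix.mul_assoc]
      _ = Z⁻¹ᵀ * (Sᵀ * S) * Z⁻¹ := by rw [hU, Matrix.one_mul]
  rw [hKK, hL, ← hS, Matrix.mul_add, Matrix.add_mul, Matrix.mul_smul, Matrix.smul_mul,
    Matrix.mul_one]

lemma tikhonov_normal_mul_eq_one (hK : K = U * S * Z⁻¹) (hU : Uᵀ * U = 1) (hZ : IsUnit Z.det)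
    (hL : Lᵀ * L = Z⁻¹ᵀ * Z⁻¹) (hS : Sᵀ * S + c • 1 = diagonal d) (hd : ∀ j, d j ≠ 0) :
    (Kᵀ * K + c • (Lᵀ * L)) * (Z * diagonal d⁻¹ * Zᵀ) = 1 := by
  have hdd : diagonal d * diagonal d⁻¹ = 1 := by
    rw [diagonal_mul_diagonal, ← diagonal_one]
    exact congrArg diagonal (funext fun j => mul_inv_cancel₀ (hd j))
  calc (Kᵀ * K + c • (Lᵀ * L)) * (Z * diagonal d⁻¹ * Zᵀ)
      = Z⁻¹ᵀ * (diagonal d * (Z⁻¹ * Z) * diagonal d⁻¹) * Zᵀ := by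
        rw [tikhonov_normal_eq hK hU hL hS]
        simp only [Matrix.mul_assoc]
    _ = (Z * Z⁻¹)ᵀ := by
        rw [nonsing_inv_mul _ hZ, Matrix.mul_one, hdd, Matrix.mul_one, transpose_mul]
    _ = 1 := by rw [mul_nonsing_inv _ hZ, transpose_one]

lemma tikhonov_solution (hK : K = U * S * Z⁻¹) (hU : Uᵀ * U = 1) (hZ : IsUnit Z.det)
    (hL : Lᵀ * L = Z⁻¹ᵀ * Z⁻¹) (hS : Sᵀ * S + c • 1 = diagonal d) (hd : ∀ j, d j ≠ 0) :
    IsUnit (Kᵀ * K + c • (Lᵀ * L)) ∧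
      (Kᵀ * K + c • (Lᵀ * L))⁻¹ * Kᵀ = Z * diagonal d⁻¹ * Sᵀ * Uᵀ := by
  have hT := tikhonov_normal_mul_eq_one hK hU hZ hL hS hd
  refine ⟨IsUnit.of_mul_eq_one _ hT, ?_⟩
  calc (Kᵀ * K + c • (Lᵀ * L))⁻¹ * Kᵀ = Z * diagonal d⁻¹ * (Zᵀ * Z⁻¹ᵀ) * Sᵀ * Uᵀ := by
        rw [inv_eq_right_inv hT, hK]
        simp only [transpose_mul, Matrix.mul_assoc]
    _ = Z * diagonal d⁻¹ * Sᵀ * Uᵀ := by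
        rw [← transpose_mul, nonsing_inv_mul _ hZ, transpose_one, Matrix.mul_one]

end Tikhonov

def rectDiagonal {𝕜 : Type*} [Zero 𝕜] (m n r : ℕ) (σ : ℕ → 𝕜) :
    Matrix (Fin m) (Fin n) 𝕜 :=
  of fun i j => if (i : ℕ) = j ∧ (i : ℕ) < r then σ i else 0

section RectDiagonal

variable {𝕜 : Type*} {m n r : ℕ} {σ : ℕ → 𝕜}

lemma transpose_rectDiagonal_mulVec_apply [CommSemiring 𝕜] (hrm : r ≤ m) (u : Fin m → 𝕜)
    (j : Fin n) :
    ((rectDiagonal m n r σ)ᵀ *ᵥ u) j =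
      if h : (j : ℕ) < r then σ j * u ⟨j, h.trans_le hrm⟩ else 0 := by
  change ∑ i, rectDiagonal m n r σ i j * u i = _
  split_ifs with hj
  · refine (Finset.sum_eq_single_of_mem ⟨j, hj.trans_le hrm⟩ (Finset.mem_univ _)
      fun i _ hi => ?_).trans ?_
    · simp only [rectDiagonal, of_apply, ite_mul, zero_mul]
      exact if_neg fun h => hi (Fin.ext h.1)
    · simp [rectDiagonal, hj]
  · refine Finset.sum_eq_zero fun i _ => ?_
    simp only [rectDiagonal, of_apply, ite_mul, zero_mul]
    exact if_neg fun h : (i : ℕ) = j ∧ (i : ℕ) < r => hj (h.1 ▸ h.2)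

lemma transpose_rectDiagonal_mul_self_add_smul_one [CommSemiring 𝕜] (hrm : r ≤ m) (c : 𝕜) :
    (rectDiagonal m n r σ)ᵀ * rectDiagonal m n r σ + c • 1 =
      diagonal fun j : Fin n => if (j : ℕ) < r then σ j ^ 2 + c else c := by
  refine Matrix.ext fun j k => ?_
  change ((rectDiagonal m n r σ)ᵀ *ᵥ fun i => rectDiagonal m n r σ i k) j + _ = _
  simp only [transpose_rectDiagonal_mulVec_apply hrm, smul_apply, diagonal_apply, one_apply]
  by_cases hjk : j = k
  · subst hjk
    split_ifs <;> simp_all [rectDiagonal, sq]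
  · split_ifs <;> simp_all [rectDiagonal, Fin.val_inj]

lemma mulVec_diagonal_inv_transpose_rectDiagonal_mulVec [Field 𝕜] {p : ℕ} (hrm : r ≤ m)
    (hrn : r ≤ n) (c : 𝕜) (Z : Matrix (Fin p) (Fin n) 𝕜) (u : Fin m → 𝕜) :
    Z *ᵥ (diagonal (fun j : Fin n => if (j : ℕ) < r then σ j ^ 2 + c else c)⁻¹ *ᵥ
      ((rectDiagonal m n r σ)ᵀ *ᵥ u)) =
      ∑ i : Fin r, (σ i ^ 2 / (σ i ^ 2 + c) * (u (Fin.castLE hrm i) / σ i)) •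
        Zᵀ (Fin.castLE hrn i) := by
  rw [mulVec_eq_sum, Fin.sum_univ_eq_sum_castLE hrn]
  · refine Finset.sum_congr rfl fun i _ => ?_
    simp only [mulVec_diagonal, transpose_rectDiagonal_mulVec_apply hrm, Pi.inv_apply,
      Fin.val_castLE, i.isLt, if_true, dif_pos, op_smul_eq_smul]
    congr 1
    -- also true for `σ i = 0`, where both sides vanish
    rcases eq_or_ne (σ i) 0 with hσ | hσ
    · simp [hσ]
    · field_simp
      rfl
  · intro j hj
    simp only [mulVec_diagonal, transpose_rectDiagonal_mulVec_apply hrm, dif_neg (not_lt.2 hj),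
      mul_zero, MulOpposite.op_zero, zero_smul]

end RectDiagonal

end Matrix

theorem tikhonov_gsvd_expansion_general {m n : ℕ} (r : ℕ) (hrm : r ≤ m) (hrn : r ≤ n)
    (A : Matrix (Fin m) (Fin n) ℝ) (b : Fin m → ℝ)
    (N : Matrix (Fin n) (Fin n) ℝ)
    (LM : Matrix (Fin m) (Fin m) ℝ) (LN : Matrix (Fin n) (Fin n) ℝ)
    (hLNN : LNᵀ * LN = N⁻¹)
    (UA : Matrix (Fin m) (Fin m) ℝ) (hUA : UAᵀ * UA = 1)
    (Z : Matrix (Fin n) (Fin n) ℝ) (hZN : Zᵀ * N⁻¹ * Z = 1)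
    (σ : ℕ → ℝ)
    (SigA : Matrix (Fin m) (Fin n) ℝ)
    (hSigA : ∀ (i : Fin m) (j : Fin n),
      SigA i j = if (i : ℕ) = (j : ℕ) ∧ (i : ℕ) < r then σ (i : ℕ) else 0)
    (hgsvd : LM * A = UA * SigA * Z⁻¹) :
    ∀ lam : ℝ, 0 < lam →
      IsUnit ((LM * A)ᵀ * (LM * A) + lam • (LNᵀ * LN)) ∧
      (((LM * A)ᵀ * (LM * A) + lam • (LNᵀ * LN))⁻¹ * (LM * A)ᵀ) *ᵥ (LM *ᵥ b) =
        ∑ i : Fin r,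
          ((σ (i : ℕ) ^ 2 / (σ (i : ℕ) ^ 2 + lam)) *
            ((UAᵀ (Fin.castLE hrm i) ⬝ᵥ (LM *ᵥ b)) / σ (i : ℕ))) •
            Zᵀ (Fin.castLE hrn i) := by
  intro lam hlam
  have hSig : SigA = rectDiagonal m n r σ := Matrix.ext hSigA
  subst hSig
  have hd : ∀ j : Fin n, (if (j : ℕ) < r then σ j ^ 2 + lam else lam) ≠ 0 := fun j => by
    split_ifs <;> positivity
  obtain ⟨hunit, hsol⟩ :=
    tikhonov_solution hgsvd hUA (isUnit_det_of_transpose_mul_mul_eq_one hZN)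
    (hLNN.trans (eq_transpose_inv_mul_inv_of_transpose_mul_mul_eq_one hZN))
    (transpose_rectDiagonal_mul_self_add_smul_one hrm lam) hd
  refine ⟨hunit, ?_⟩
  rw [hsol, ← mulVec_mulVec, ← mulVec_mulVec, ← mulVec_mulVec]
  exact mulVec_diagonal_inv_transpose_rectDiagonal_mulVec hrm hrn lam Z (UAᵀ *ᵥ (LM *ᵥ b))

/-- Under the GSVD setup, for every `λ > 0` the matrix
`(L_M A)ᵀ L_M A + λ L_Nᵀ L_N` is invertible and the Tikhonov solution
`x_λ = [(L_M A)ᵀ L_M A + λ L_Nᵀ L_N]⁻¹ (L_M A)ᵀ L_M b` has the filtered GSVD expansion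
`x_λ = Σ_{i=1}^r (γ_i²/(γ_i²+λ)) ((u_{A,i}ᵀ L_M b)/σ_i) z_i` with `γ_i = σ_i`. -/
theorem tikhonov_gsvd_expansion {m n : ℕ} (r : ℕ) (hrm : r ≤ m) (hrn : r ≤ n)
    (A : Matrix (Fin m) (Fin n) ℝ) (b : Fin m → ℝ)
    (M : Matrix (Fin m) (Fin m) ℝ) (N : Matrix (Fin n) (Fin n) ℝ)
    (hM : M.PosDef) (hN : N.PosDef)
    (LM : Matrix (Fin m) (Fin m) ℝ) (LN : Matrix (Fin n) (Fin n) ℝ)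
    (hLM : IsUnit LM.det) (hLN : IsUnit LN.det)
    (hLMM : LMᵀ * LM = M⁻¹) (hLNN : LNᵀ * LN = N⁻¹)
    (UA : Matrix (Fin m) (Fin m) ℝ) (hUA : UAᵀ * UA = 1)
    (Z : Matrix (Fin n) (Fin n) ℝ) (hZ : IsUnit Z.det) (hZN : Zᵀ * N⁻¹ * Z = 1)
    (σ : ℕ → ℝ)
    (hσpos : ∀ i, i < r → 0 < σ i) (hσlt1 : ∀ i, i < r → σ i < 1)
    (hσord : ∀ i j, i ≤ j → j < r → σ j ≤ σ i)
    (SigA : Matrix (Fin m) (Fin n) ℝ)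
    (hSigA : ∀ (i : Fin m) (j : Fin n),
      SigA i j = if (i : ℕ) = (j : ℕ) ∧ (i : ℕ) < r then σ (i : ℕ) else 0)
    (hgsvd : LM * A = UA * SigA * Z⁻¹) :
    ∀ lam : ℝ, 0 < lam →
      IsUnit ((LM * A)ᵀ * (LM * A) + lam • (LNᵀ * LN)) ∧
      (((LM * A)ᵀ * (LM * A) + lam • (LNᵀ * LN))⁻¹ * (LM * A)ᵀ) *ᵥ (LM *ᵥ b) =
        ∑ i : Fin r,
          ((σ (i : ℕ) ^ 2 / (σ (i : ℕ) ^ 2 + lam)) *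
            ((UAᵀ (Fin.castLE hrm i) ⬝ᵥ (LM *ᵥ b)) / σ (i : ℕ))) •
            Zᵀ (Fin.castLE hrn i) :=
  tikhonov_gsvd_expansion_general r hrm hrn A b N LM LN hLNN UA hUA Z hZN σ SigA hSigA hgsvd
end

section
/- Under the GSVD setup, for every integer i ≥ 0 it holds that (N Aᵀ M^{-1} A)^i N Aᵀ M^{-1} b = Z_r D_A^{2i+1} U_{A,r}ᵀ L_M b, where Z_r and U_{A,r} denote the matrices of the first r columns of Z and U_A respectively. Consequently, for every k ≥ 1, the Krylov subspace K_k(N Aᵀ M^{-1} A, N Aᵀ M^{-1} b) = span{(N Aᵀ M^{-1} A)^i N Aᵀ M^{-1} b : 0 ≤ i ≤ k−1} equals span{Z_r D_A^{2i+1} U_{A,r}ᵀ L_M b : 0 ≤ i ≤ k−1}. -/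
/-!
From `Zᵀ N⁻¹ Z = 1` one gets `N = Z Zᵀ`, so with `W = U_Aᵀ L_M` the GSVD gives
`N Aᵀ M⁻¹ = Z Σ_Aᵀ W` and `W A Z = Σ_A`. Thus `Z` intertwines `N Aᵀ M⁻¹ A` with `Σ_Aᵀ Σ_A`, and
`(N Aᵀ M⁻¹ A)^i N Aᵀ M⁻¹ = Z (Σ_Aᵀ Σ_A)^i Σ_Aᵀ W`. Writing `Σ_A = E_m D_A E_nᵀ`, where `E_k` consists
of the first `r` columns of the `k × k` identity and so has orthonormal columns, the middle factor
collapses to `E_n D_A^{2i+1} E_mᵀ`, while `Z E_n = Z_r` and `U_A E_m = U_{A,r}`. The two Krylov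
spaces agree because their generators agree.
-/

open Matrix

namespace Matrix

def truncatedIdentity (R : Type*) [Zero R] [One R] {m r : ℕ} (h : r ≤ m) :
    Matrix (Fin m) (Fin r) R :=
  (1 : Matrix (Fin m) (Fin m) R).submatrix id (Fin.castLE h)

variable {R : Type*}

section TruncatedIdentity

variable [Semiring R] {m n r : ℕ}

theorem mul_truncatedIdentity {l : Type*} (M : Matrix l (Fin m) R) (h : r ≤ m) :
    M * truncatedIdentity R h = M.submatrix id (Fin.castLE h) :=
  mul_submatrix_one (Equiv.refl _) _ M

theorem transpose_truncatedIdentity_mul_self (h : r ≤ m) :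
    (truncatedIdentity R h)ᵀ * truncatedIdentity R h = 1 := by
  rw [mul_truncatedIdentity, truncatedIdentity, transpose_submatrix, transpose_one,
    submatrix_submatrix]
  exact submatrix_one _ (Fin.castLE_injective h)

theorem truncatedIdentity_mul_diagonal_mul_transpose_apply (σ : ℕ → R) (hm : r ≤ m) (hn : r ≤ n)
    (i : Fin m) (j : Fin n) :
    (truncatedIdentity R hm * diagonal (fun a : Fin r => σ a) * (truncatedIdentity R hn)ᵀ) i j =
      if (i : ℕ) = j ∧ (i : ℕ) < r then σ i else 0 := by
  rw [mul_apply]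
  simp only [mul_diagonal, transpose_apply, truncatedIdentity, submatrix_apply, id_eq, one_apply,
    Fin.ext_iff, Fin.val_castLE]
  by_cases hi : (i : ℕ) < r
  · rw [Fintype.sum_eq_single ⟨i, hi⟩ fun a ha => by
      rw [if_neg (Fin.val_ne_of_ne ha).symm, zero_mul, zero_mul]]
    simp only [↓reduceIte, one_mul, hi, and_true, eq_comm (a := (j : ℕ))]
    split_ifs <;> simp
  · refine (Finset.sum_eq_zero fun a _ => ?_).trans (if_neg (by tauto)).symm
    rw [if_neg (by omega), zero_mul, zero_mul]

end TruncatedIdentity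

section CommSemiring

variable [CommSemiring R]

theorem pow_transpose_mul_self_mul_transpose {l m r : Type*} [Fintype l] [Fintype m]
    [Fintype r] [DecidableEq m] [DecidableEq r]
    {E : Matrix l r R} {F : Matrix m r R} {D : Matrix r r R}
    (hE : Eᵀ * E = 1) (hF : Fᵀ * F = 1) (hD : Dᵀ = D) (i : ℕ) :
    ((E * D * Fᵀ)ᵀ * (E * D * Fᵀ)) ^ i * (E * D * Fᵀ)ᵀ = F * D ^ (2 * i + 1) * Eᵀ := by
  induction i with
  | zero => simp [transpose_mul, hD, Matrix.mul_assoc]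
  | succ i ih =>
    calc ((E * D * Fᵀ)ᵀ * (E * D * Fᵀ)) ^ (i + 1) * (E * D * Fᵀ)ᵀ
        = F * D * (Eᵀ * E) * D * (Fᵀ * F) * D ^ (2 * i + 1) * Eᵀ := by
          rw [pow_succ', Matrix.mul_assoc, ih]
          simp only [transpose_mul, transpose_transpose, hD, Matrix.mul_assoc]
      _ = F * D ^ (2 * (i + 1) + 1) * Eᵀ := by
          rw [hE, hF, Matrix.mul_one, Matrix.mul_one,
            show 2 * (i + 1) + 1 = 2 * i + 1 + 1 + 1 by ring, pow_succ' D (2 * i + 1 + 1),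
            pow_succ' D (2 * i + 1)]
          simp only [Matrix.mul_assoc]

theorem pow_mul_mul_of_eq_mul_transpose_mul {m n : Type*} [Fintype m] [Fintype n]
    [DecidableEq n] {A : Matrix m n R} {B : Matrix n m R} {Z : Matrix n n R} {W : Matrix m m R}
    {S : Matrix m n R}
    (hB : B = Z * Sᵀ * W) (hA : W * A * Z = S) (i : ℕ) :
    (B * A) ^ i * B = Z * (Sᵀ * S) ^ i * Sᵀ * W := by
  have hsemiconj : SemiconjBy Z (Sᵀ * S) (B * A) := by
    simp only [SemiconjBy, hB, Matrix.mul_assoc]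
    rw [← Matrix.mul_assoc W A Z, hA]
  calc (B * A) ^ i * B = (B * A) ^ i * Z * Sᵀ * W := by rw [hB]; simp only [Matrix.mul_assoc]
    _ = Z * (Sᵀ * S) ^ i * Sᵀ * W := by rw [← (hsemiconj.pow_right i).eq]

end CommSemiring

theorem eq_mul_transpose_of_transpose_mul_inv_mul_eq_one [CommRing R] {n : Type*} [Fintype n]
    [DecidableEq n] {N Z : Matrix n n R} (h : Zᵀ * N⁻¹ * Z = 1) : N = Z * Zᵀ := by
  have hright : Z * Zᵀ * N⁻¹ = 1 := by
    rw [Matrix.mul_assoc]; exact mul_eq_one_comm.mp h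
  have hN : IsUnit N.det :=
    isUnit_nonsing_inv_det_iff.mp (isUnit_det_of_left_inverse hright)
  calc N = Z * Zᵀ * N⁻¹ * N := by rw [hright, Matrix.one_mul]
    _ = Z * Zᵀ := by rw [Matrix.mul_assoc, nonsing_inv_mul N hN, Matrix.mul_one]

end Matrix

theorem krylov_subspace_gsvd_form_general {m n : ℕ} (r : ℕ) (hrm : r ≤ m) (hrn : r ≤ n)
    (A : Matrix (Fin m) (Fin n) ℝ) (b : Fin m → ℝ)
    (M : Matrix (Fin m) (Fin m) ℝ) (N : Matrix (Fin n) (Fin n) ℝ)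
    (LM : Matrix (Fin m) (Fin m) ℝ)
    (hLMM : LMᵀ * LM = M⁻¹)
    (UA : Matrix (Fin m) (Fin m) ℝ) (hUA : UAᵀ * UA = 1)
    (Z : Matrix (Fin n) (Fin n) ℝ) (hZN : Zᵀ * N⁻¹ * Z = 1)
    (σ : ℕ → ℝ)
    (SigA : Matrix (Fin m) (Fin n) ℝ)
    (hSigA : ∀ (i : Fin m) (j : Fin n),
      SigA i j = if (i : ℕ) = (j : ℕ) ∧ (i : ℕ) < r then σ (i : ℕ) else 0)
    (hgsvd : LM * A = UA * SigA * Z⁻¹)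
    (Zr : Matrix (Fin n) (Fin r) ℝ) (hZr : Zr = Z.submatrix id (Fin.castLE hrn))
    (UAr : Matrix (Fin m) (Fin r) ℝ) (hUAr : UAr = UA.submatrix id (Fin.castLE hrm))
    (DA : Matrix (Fin r) (Fin r) ℝ)
    (hDA : DA = Matrix.diagonal fun i : Fin r => σ (i : ℕ)) :
    (∀ i : ℕ,
      ((N * Aᵀ * M⁻¹ * A) ^ i * (N * Aᵀ * M⁻¹)) *ᵥ b =
        (Zr * DA ^ (2 * i + 1) * UArᵀ * LM) *ᵥ b) ∧
    (∀ k : ℕ, 1 ≤ k →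
      Submodule.span ℝ {w : Fin n → ℝ | ∃ i, i < k ∧
          w = ((N * Aᵀ * M⁻¹ * A) ^ i * (N * Aᵀ * M⁻¹)) *ᵥ b} =
      Submodule.span ℝ {w : Fin n → ℝ | ∃ i, i < k ∧
          w = (Zr * DA ^ (2 * i + 1) * UArᵀ * LM) *ᵥ b}) := by
  have hLMAZ : LM * A * Z = UA * SigA := by
    rw [hgsvd, nonsing_inv_mul_cancel_right Z _ (isUnit_det_of_left_inverse hZN)]
  have hB : N * Aᵀ * M⁻¹ = Z * SigAᵀ * (UAᵀ * LM) := by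
    rw [eq_mul_transpose_of_transpose_mul_inv_mul_eq_one hZN, ← hLMM]
    calc Z * Zᵀ * Aᵀ * (LMᵀ * LM) = Z * (LM * A * Z)ᵀ * LM := by
          simp only [transpose_mul, Matrix.mul_assoc]
      _ = Z * SigAᵀ * (UAᵀ * LM) := by
          rw [hLMAZ, transpose_mul]; simp only [Matrix.mul_assoc]
  have hWAZ : UAᵀ * LM * A * Z = SigA := by
    rw [Matrix.mul_assoc (UAᵀ * LM), Matrix.mul_assoc UAᵀ, ← Matrix.mul_assoc LM, hLMAZ,
      ← Matrix.mul_assoc, hUA, Matrix.one_mul]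
  have hSigA' : SigA = truncatedIdentity ℝ hrm * diagonal (fun a : Fin r => σ a) *
      (truncatedIdentity ℝ hrn)ᵀ := by
    ext i j
    rw [hSigA, truncatedIdentity_mul_diagonal_mul_transpose_apply]
  have hmain : ∀ i : ℕ,
      (N * Aᵀ * M⁻¹ * A) ^ i * (N * Aᵀ * M⁻¹) = Zr * DA ^ (2 * i + 1) * UArᵀ * LM := by
    intro i
    rw [pow_mul_mul_of_eq_mul_transpose_mul hB hWAZ, hSigA', Matrix.mul_assoc Z,
      pow_transpose_mul_self_mul_transpose (transpose_truncatedIdentity_mul_self hrm)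
        (transpose_truncatedIdentity_mul_self hrn) (diagonal_transpose _),
      hZr, hUAr, hDA, ← mul_truncatedIdentity, ← mul_truncatedIdentity]
    simp only [transpose_mul, Matrix.mul_assoc]
  exact ⟨fun i => by rw [hmain], fun k _ => by simp only [hmain]⟩

/-- Under the GSVD setup, `(N Aᵀ M⁻¹ A)^i N Aᵀ M⁻¹ b = Z_r D_A^{2i+1} U_{A,r}ᵀ L_M b`
for every `i ≥ 0`; consequently, for every `k ≥ 1` the Krylov subspace
`K_k(N Aᵀ M⁻¹ A, N Aᵀ M⁻¹ b)` equals `span{Z_r D_A^{2i+1} U_{A,r}ᵀ L_M b : 0 ≤ i ≤ k−1}`. -/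
theorem krylov_subspace_gsvd_form {m n : ℕ} (r : ℕ) (hrm : r ≤ m) (hrn : r ≤ n)
    (A : Matrix (Fin m) (Fin n) ℝ) (b : Fin m → ℝ)
    (M : Matrix (Fin m) (Fin m) ℝ) (N : Matrix (Fin n) (Fin n) ℝ)
    (hM : M.PosDef) (hN : N.PosDef)
    (LM : Matrix (Fin m) (Fin m) ℝ) (LN : Matrix (Fin n) (Fin n) ℝ)
    (hLM : IsUnit LM.det) (hLN : IsUnit LN.det)
    (hLMM : LMᵀ * LM = M⁻¹) (hLNN : LNᵀ * LN = N⁻¹)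
    (UA : Matrix (Fin m) (Fin m) ℝ) (hUA : UAᵀ * UA = 1)
    (Z : Matrix (Fin n) (Fin n) ℝ) (hZ : IsUnit Z.det) (hZN : Zᵀ * N⁻¹ * Z = 1)
    (σ : ℕ → ℝ)
    (hσpos : ∀ i, i < r → 0 < σ i) (hσlt1 : ∀ i, i < r → σ i < 1)
    (hσord : ∀ i j, i ≤ j → j < r → σ j ≤ σ i)
    (SigA : Matrix (Fin m) (Fin n) ℝ)
    (hSigA : ∀ (i : Fin m) (j : Fin n),
      SigA i j = if (i : ℕ) = (j : ℕ) ∧ (i : ℕ) < r then σ (i : ℕ) else 0)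
    (hgsvd : LM * A = UA * SigA * Z⁻¹)
    (Zr : Matrix (Fin n) (Fin r) ℝ) (hZr : Zr = Z.submatrix id (Fin.castLE hrn))
    (UAr : Matrix (Fin m) (Fin r) ℝ) (hUAr : UAr = UA.submatrix id (Fin.castLE hrm))
    (DA : Matrix (Fin r) (Fin r) ℝ)
    (hDA : DA = Matrix.diagonal fun i : Fin r => σ (i : ℕ)) :
    (∀ i : ℕ,
      ((N * Aᵀ * M⁻¹ * A) ^ i * (N * Aᵀ * M⁻¹)) *ᵥ b =
        (Zr * DA ^ (2 * i + 1) * UArᵀ * LM) *ᵥ b) ∧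
    (∀ k : ℕ, 1 ≤ k →
      Submodule.span ℝ {w : Fin n → ℝ | ∃ i, i < k ∧
          w = ((N * Aᵀ * M⁻¹ * A) ^ i * (N * Aᵀ * M⁻¹)) *ᵥ b} =
      Submodule.span ℝ {w : Fin n → ℝ | ∃ i, i < k ∧
          w = (Zr * DA ^ (2 * i + 1) * UArᵀ * LM) *ᵥ b}) :=
  krylov_subspace_gsvd_form_general r hrm hrn A b M N LM hLMM UA hUA Z hZN σ SigA hSigA hgsvd Zr hZr
    UAr hUAr DA hDA
end

section
/- Let N ∈ ℝ^{n×n} be symmetric positive definite. Let (F_1, F_2) and (G_1, G_2) be two n×n matrices whose columns are N^{-1}-orthonormal bases of ℝ^n (i.e. (F_1,F_2)ᵀ N^{-1} (F_1,F_2) = I and (G_1,G_2)ᵀ N^{-1} (G_1,G_2) = I), with F_1, G_1 ∈ ℝ^{n×k}. Let F = span(F_1) and G = span(G_1). Then dist(F, G) = ‖F_2ᵀ N^{-1} G_1‖_2, where ‖·‖_2 is the spectral norm. -/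
/-!
Parametrising `u = F₁ c` and `v = G₁ d`, the `N⁻¹`-orthonormality of the columns turns the
canonical angle into a Euclidean one: by Cauchy–Schwarz the inner infimum is
`arccos (‖Pᵀ c‖ / ‖c‖)` with `P = F₁ᵀ N⁻¹ G₁`, so `cos Θ` is the minimum modulus (smallest
singular value) of `Pᵀ`. Since `(F₁, F₂)` is a square `N⁻¹`-orthonormal basis, `F Fᵀ N⁻¹ = 1`,
which makes `y ↦ (P y, Q y)` with `Q = F₂ᵀ N⁻¹ G₁` an isometry; hence `‖Q‖² = 1 - σ_min(P)²`.
A square matrix and its transpose have the same minimum modulus, and `sin (arccos m) = √(1 - m²)`.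
-/

open Matrix

/-- The spectral (operator 2-) norm of a real matrix. -/
noncomputable def matrixSpectralNorm {p q : ℕ} (A : Matrix (Fin p) (Fin q) ℝ) : ℝ :=
  ‖LinearMap.toContinuousLinearMap (Matrix.toEuclideanLin A)‖

/-- The maximum canonical angle `Θ(F,G)` between two subspaces of `ℝⁿ` equipped with the
`W`-inner product `⟨x, x'⟩_W = xᵀ W x'` (here `W` plays the role of `N⁻¹`). -/
noncomputable def maxCanonicalAngle {n : ℕ} (W : Matrix (Fin n) (Fin n) ℝ)
    (F G : Submodule ℝ (Fin n → ℝ)) : ℝ :=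
  ⨆ u : {u : Fin n → ℝ // u ∈ F ∧ u ≠ 0},
    ⨅ v : {v : Fin n → ℝ // v ∈ G ∧ v ≠ 0},
      Real.arccos (|u.1 ⬝ᵥ (W *ᵥ v.1)| /
        (Real.sqrt (u.1 ⬝ᵥ (W *ᵥ u.1)) * Real.sqrt (v.1 ⬝ᵥ (W *ᵥ v.1))))

/-- The distance `dist(F,G) = sin Θ(F,G)` between two subspaces. -/
noncomputable def subspaceDist {n : ℕ} (W : Matrix (Fin n) (Fin n) ℝ)
    (F G : Submodule ℝ (Fin n → ℝ)) : ℝ :=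
  Real.sin (maxCanonicalAngle W F G)

open Real
open scoped RealInnerProductSpace
open WithLp (ofLp)

namespace ContinuousLinearMap

section Normed

variable {E F G : Type*} [NormedAddCommGroup E] [NormedSpace ℝ E]
  [NormedAddCommGroup F] [NormedSpace ℝ F] [NormedAddCommGroup G] [NormedSpace ℝ G]

/-- For an operator on a finite-dimensional space this is its smallest singular value. -/
noncomputable def minimumModulus (T : E →L[ℝ] F) : ℝ :=
  ⨅ x : {x : E // x ≠ 0}, ‖T x‖ / ‖(x : E)‖

variable (T : E →L[ℝ] F)

theorem minimumModulus_nonneg : 0 ≤ T.minimumModulus :=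
  Real.iInf_nonneg fun _ => by positivity

theorem minimumModulus_mul_norm_le (x : E) : T.minimumModulus * ‖x‖ ≤ ‖T x‖ := by
  rcases eq_or_ne x 0 with rfl | hx
  · simp
  · have hbdd : BddBelow (Set.range fun y : {y : E // y ≠ 0} => ‖T y‖ / ‖(y : E)‖) :=
      ⟨0, by rintro _ ⟨y, rfl⟩; positivity⟩
    exact (le_div_iff₀ (norm_pos_iff.2 hx)).1 (ciInf_le hbdd ⟨x, hx⟩)

theorem injective_of_minimumModulus_pos (h : 0 < T.minimumModulus) : Function.Injective T := by
  refine (injective_iff_map_eq_zero T).2 fun x hx => norm_eq_zero.1 ?_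
  have := T.minimumModulus_mul_norm_le x
  rw [hx, norm_zero] at this
  exact le_antisymm (nonpos_of_mul_nonpos_right this h) (norm_nonneg x)

theorem le_minimumModulus [Nontrivial E] {c : ℝ} (h : ∀ x, c * ‖x‖ ≤ ‖T x‖) :
    c ≤ T.minimumModulus :=
  have : Nonempty {x : E // x ≠ 0} := nonempty_subtype.2 (exists_ne 0)
  le_ciInf fun x => (le_div_iff₀ (norm_pos_iff.2 x.2)).2 (h x)

theorem exists_norm_eq_one_norm_apply_eq_minimumModulus [FiniteDimensional ℝ E]
    [Nontrivial E] : ∃ x : E, ‖x‖ = 1 ∧ ‖T x‖ = T.minimumModulus := by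
  obtain ⟨x₀, hx₀, hmin⟩ := (isCompact_sphere (0 : E) 1).exists_isMinOn
    (NormedSpace.sphere_nonempty.2 zero_le_one) T.continuous.norm.continuousOn
  rw [mem_sphere_zero_iff_norm] at hx₀
  refine ⟨x₀, hx₀, le_antisymm (T.le_minimumModulus fun x => ?_) ?_⟩
  · rcases eq_or_ne x 0 with rfl | hx
    · simp
    have hx' : 0 < ‖x‖ := norm_pos_iff.2 hx
    have hx₀_le : ‖T x₀‖ ≤ ‖T (‖x‖⁻¹ • x)‖ := hmin (by simp [norm_smul, hx'.ne'])
    calc ‖T x₀‖ * ‖x‖ ≤ ‖T (‖x‖⁻¹ • x)‖ * ‖x‖ := by gcongr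
      _ = ‖T x‖ := by rw [map_smul, norm_smul, norm_inv, norm_norm]; field_simp
  · simpa [hx₀] using T.minimumModulus_mul_norm_le x₀

theorem norm_eq_sqrt_one_sub_minimumModulus_sq [FiniteDimensional ℝ E] [Nontrivial E]
    (Q : E →L[ℝ] G) (h : ∀ x, ‖T x‖ ^ 2 + ‖Q x‖ ^ 2 = ‖x‖ ^ 2) :
    ‖Q‖ = √(1 - T.minimumModulus ^ 2) := by
  have hQ : ∀ x, ‖Q x‖ = √(‖x‖ ^ 2 - ‖T x‖ ^ 2) := fun x => by
    rw [← h x, add_sub_cancel_left, sqrt_sq (norm_nonneg _)]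
  apply le_antisymm
  · refine opNorm_le_bound _ (sqrt_nonneg _) fun x => ?_
    rw [hQ, ← sqrt_sq (norm_nonneg x), ← sqrt_mul' _ (sq_nonneg _), sqrt_sq (norm_nonneg x)]
    apply sqrt_le_sqrt
    have := pow_le_pow_left₀ (mul_nonneg T.minimumModulus_nonneg (norm_nonneg x))
      (T.minimumModulus_mul_norm_le x) 2
    linarith [mul_pow T.minimumModulus ‖x‖ 2]
  · obtain ⟨x₀, hx₀, hTx₀⟩ := T.exists_norm_eq_one_norm_apply_eq_minimumModulus
    calc √(1 - T.minimumModulus ^ 2) = ‖Q x₀‖ := by rw [hQ, hx₀, hTx₀, one_pow]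
      _ ≤ ‖Q‖ := Q.unit_le_opNorm x₀ hx₀.le

end Normed

section InnerProduct

variable {E : Type*} [NormedAddCommGroup E] [InnerProductSpace ℝ E]

theorem minimumModulus_le_minimumModulus_adjoint [FiniteDimensional ℝ E] [Nontrivial E]
    (T : E →L[ℝ] E) : T.minimumModulus ≤ (adjoint T).minimumModulus := by
  rcases T.minimumModulus_nonneg.eq_or_lt with h0 | hpos
  · exact h0 ▸ (adjoint T).minimumModulus_nonneg
  refine (adjoint T).le_minimumModulus fun y => ?_
  obtain ⟨x, rfl⟩ : ∃ x, T x = y :=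
    LinearMap.injective_iff_surjective.1 (T.injective_of_minimumModulus_pos hpos) y
  rcases eq_or_ne x 0 with rfl | hx
  · simp
  refine le_of_mul_le_mul_right ?_ (norm_pos_iff.2 hx)
  calc T.minimumModulus * ‖T x‖ * ‖x‖ = T.minimumModulus * ‖x‖ * ‖T x‖ := by ring
    _ ≤ ‖T x‖ * ‖T x‖ := by gcongr; exact T.minimumModulus_mul_norm_le x
    _ = ⟪adjoint T (T x), x⟫ := by rw [adjoint_inner_left, real_inner_self_eq_norm_mul_norm]
    _ ≤ ‖adjoint T (T x)‖ * ‖x‖ := real_inner_le_norm _ _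

theorem minimumModulus_adjoint [FiniteDimensional ℝ E] [Nontrivial E] (T : E →L[ℝ] E) :
    (adjoint T).minimumModulus = T.minimumModulus :=
  le_antisymm (by simpa using (adjoint T).minimumModulus_le_minimumModulus_adjoint)
    T.minimumModulus_le_minimumModulus_adjoint

end InnerProduct

end ContinuousLinearMap

section Angles

variable {E F : Type*} [NormedAddCommGroup E] [InnerProductSpace ℝ E]
  [NormedAddCommGroup F] [InnerProductSpace ℝ F]

theorem iInf_arccos_abs_inner_div [Nontrivial E] (z : E) {r : ℝ} (hr : 0 ≤ r) :
    ⨅ y : {y : E // y ≠ 0}, arccos (|⟪z, (y : E)⟫| / (r * ‖(y : E)‖)) = arccos (‖z‖ / r) := by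
  refine IsLeast.csInf_eq ⟨?_, ?_⟩
  · rcases eq_or_ne z 0 with rfl | hz
    · obtain ⟨y, hy⟩ := exists_ne (0 : E)
      exact ⟨⟨y, hy⟩, by simp⟩
    · refine ⟨⟨z, hz⟩, ?_⟩
      dsimp only
      rw [real_inner_self_eq_norm_mul_norm, abs_mul_self, mul_comm r, ← div_div,
        mul_div_cancel_right₀ _ (norm_ne_zero_iff.2 hz)]
  · rintro _ ⟨y, rfl⟩
    refine arccos_le_arccos ?_
    rw [mul_comm r, ← div_div]
    exact div_le_div_of_nonneg_right
      ((div_le_iff₀ (norm_pos_iff.2 y.2)).2 (abs_real_inner_le_norm z y)) hr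

open ContinuousLinearMap in
theorem iSup_iInf_arccos_abs_inner_apply_div [FiniteDimensional ℝ E] [FiniteDimensional ℝ F]
    [Nontrivial E] [Nontrivial F] (T : E →L[ℝ] F) :
    ⨆ x : {x : F // x ≠ 0}, ⨅ y : {y : E // y ≠ 0},
      arccos (|⟪(x : F), T y⟫| / (‖(x : F)‖ * ‖(y : E)‖)) =
      arccos (adjoint T).minimumModulus := by
  have hinner : ∀ x : F, ⨅ y : {y : E // y ≠ 0},
      arccos (|⟪x, T y⟫| / (‖x‖ * ‖(y : E)‖)) = arccos (‖adjoint T x‖ / ‖x‖) := fun x => by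
    simp_rw [← adjoint_inner_left]
    exact iInf_arccos_abs_inner_div _ (norm_nonneg x)
  simp_rw [hinner]
  obtain ⟨x₀, hx₀, hmin⟩ := (adjoint T).exists_norm_eq_one_norm_apply_eq_minimumModulus
  refine IsGreatest.csSup_eq ⟨⟨⟨x₀, norm_ne_zero_iff.1 (by simp [hx₀])⟩, by simp [hx₀, hmin]⟩, ?_⟩
  rintro _ ⟨x, rfl⟩
  exact arccos_le_arccos ((le_div_iff₀ (norm_pos_iff.2 x.2)).2
    ((adjoint T).minimumModulus_mul_norm_le x))

end Angles

namespace Matrix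

section Orthonormal

variable {R m ι κ : Type*} [CommRing R] [Fintype m]

theorem transpose_mul_self_of_transpose_mul_mul_eq_one [DecidableEq m] [Fintype ι]
    [DecidableEq ι] [DecidableEq κ] (e : ι ≃ m) {W : Matrix m m R}
    {F : Matrix m ι R} {Y : Matrix m κ R} (hF : Fᵀ * W * F = 1) (hY : Yᵀ * W * Y = 1) :
    (Fᵀ * W * Y)ᵀ * (Fᵀ * W * Y) = 1 := by
  have hF' : F * (Fᵀ * W) = 1 := (mul_eq_one_comm_of_equiv e).1 hF
  calc (Fᵀ * W * Y)ᵀ * (Fᵀ * W * Y) = Yᵀ * Wᵀ * (F * (Fᵀ * W)) * Y := by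
        simp only [transpose_mul, transpose_transpose, Matrix.mul_assoc]
    _ = (Yᵀ * W * Y)ᵀ := by
        rw [hF', Matrix.mul_one, transpose_mul, transpose_mul, transpose_transpose,
          Matrix.mul_assoc]
    _ = 1 := by rw [hY, transpose_one]

theorem transpose_mul_mul_eq_one_of_fromCols [DecidableEq ι] {ι₂ : Type*} [DecidableEq ι₂]
    {W : Matrix m m R} {F₁ : Matrix m ι R} {F₂ : Matrix m ι₂ R}
    (hF : (fromCols F₁ F₂)ᵀ * W * fromCols F₁ F₂ = 1) : F₁ᵀ * W * F₁ = 1 := by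
  rw [transpose_fromCols, fromRows_mul, fromRows_mul_fromCols, ← fromBlocks_one] at hF
  exact congrArg toBlocks₁₁ hF

theorem transpose_mul_self_add_of_fromCols [DecidableEq m] [Fintype ι] [DecidableEq ι]
    [DecidableEq κ] {ι₂ : Type*} [Fintype ι₂] [DecidableEq ι₂]
    (e : ι ⊕ ι₂ ≃ m) {W : Matrix m m R} {F₁ : Matrix m ι R} {F₂ : Matrix m ι₂ R}
    {Y : Matrix m κ R} (hF : (fromCols F₁ F₂)ᵀ * W * fromCols F₁ F₂ = 1)
    (hY : Yᵀ * W * Y = 1) :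
    (F₁ᵀ * W * Y)ᵀ * (F₁ᵀ * W * Y) + (F₂ᵀ * W * Y)ᵀ * (F₂ᵀ * W * Y) = 1 := by
  simpa only [transpose_fromCols, fromRows_mul, transpose_fromRows, fromCols_mul_fromRows] using
    transpose_mul_self_of_transpose_mul_mul_eq_one e hF hY

end Orthonormal

section Euclidean

variable {m p q : Type*} [Fintype m] [Fintype p] [Fintype q]

theorem mulVec_dotProduct_mulVec_mulVec (X : Matrix m p ℝ) (W : Matrix m m ℝ)
    (Y : Matrix m q ℝ) (c : p → ℝ) (d : q → ℝ) :
    (X *ᵥ c) ⬝ᵥ (W *ᵥ (Y *ᵥ d)) = c ⬝ᵥ ((Xᵀ * W * Y) *ᵥ d) := by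
  rw [← vecMul_transpose, ← dotProduct_mulVec, mulVec_mulVec, mulVec_mulVec, Matrix.mul_assoc]

theorem norm_toEuclideanLin_sq [DecidableEq p] (A : Matrix m p ℝ) (y : EuclideanSpace ℝ p) :
    ‖toEuclideanLin A y‖ ^ 2 = ofLp y ⬝ᵥ ((Aᵀ * A) *ᵥ ofLp y) := by
  rw [← real_inner_self_eq_norm_sq, EuclideanSpace.inner_eq_star_dotProduct, star_trivial,
    toLpLin_apply, WithLp.ofLp_toLp, ← mulVec_mulVec, dotProduct_mulVec (ofLp y) Aᵀ,
    vecMul_transpose]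

theorem norm_toEuclideanLin_sq_add_norm_toEuclideanLin_sq [DecidableEq p] {A : Matrix m p ℝ}
    {B : Matrix q p ℝ} (h : Aᵀ * A + Bᵀ * B = 1) (y : EuclideanSpace ℝ p) :
    ‖toEuclideanLin A y‖ ^ 2 + ‖toEuclideanLin B y‖ ^ 2 = ‖y‖ ^ 2 := by
  rw [norm_toEuclideanLin_sq, norm_toEuclideanLin_sq, ← dotProduct_add, ← add_mulVec, h,
    one_mulVec, ← real_inner_self_eq_norm_sq, EuclideanSpace.inner_eq_star_dotProduct,
    star_trivial]

noncomputable def nonzeroEuclideanEquivSpanRange [DecidableEq p] {X : Matrix m p ℝ}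
    {B : Matrix p m ℝ} (h : B * X = 1) :
    {c : EuclideanSpace ℝ p // c ≠ 0} ≃
      {u : m → ℝ // u ∈ Submodule.span ℝ (Set.range Xᵀ) ∧ u ≠ 0} :=
  have hinj : Function.Injective fun c : EuclideanSpace ℝ p => X *ᵥ ofLp c := fun c d hcd =>
    WithLp.ofLp_injective 2 (by simpa [mulVec_mulVec, h] using congrArg (B *ᵥ ·) hcd)
  have hspan : Submodule.span ℝ (Set.range Xᵀ) = LinearMap.range X.mulVecLin :=
    (range_mulVecLin X).symm
  have hmem : ∀ c : EuclideanSpace ℝ p, X *ᵥ ofLp c ∈ Submodule.span ℝ (Set.range Xᵀ) :=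
    fun c => hspan ▸ LinearMap.mem_range_self X.mulVecLin _
  Equiv.ofBijective
    (fun c => ⟨X *ᵥ ofLp c.1, hmem c, fun h0 => c.2 (hinj (by simpa using h0))⟩)
    ⟨fun c d hcd => Subtype.ext (hinj (congrArg Subtype.val hcd)), fun u => by
      obtain ⟨c, hc⟩ : u.1 ∈ LinearMap.range X.mulVecLin := hspan ▸ u.2.1
      refine ⟨⟨WithLp.toLp 2 c, fun h0 => u.2.2 ?_⟩, Subtype.ext hc⟩
      simp_all⟩

@[simp]
theorem coe_nonzeroEuclideanEquivSpanRange_apply [DecidableEq p] {X : Matrix m p ℝ}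
    {B : Matrix p m ℝ} (h : B * X = 1)
    (c : {c : EuclideanSpace ℝ p // c ≠ 0}) :
    (nonzeroEuclideanEquivSpanRange h c : m → ℝ) = X *ᵥ ofLp (c : EuclideanSpace ℝ p) :=
  rfl

end Euclidean

end Matrix

theorem maxCanonicalAngle_span_range {n : ℕ} {p q : Type*} [Fintype p] [DecidableEq p]
    [Fintype q] [DecidableEq q] {W : Matrix (Fin n) (Fin n) ℝ} {X : Matrix (Fin n) p ℝ}
    {Y : Matrix (Fin n) q ℝ} (hX : Xᵀ * W * X = 1) (hY : Yᵀ * W * Y = 1) :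
    maxCanonicalAngle W (Submodule.span ℝ (Set.range Xᵀ)) (Submodule.span ℝ (Set.range Yᵀ)) =
      ⨆ x : {x : EuclideanSpace ℝ p // x ≠ 0}, ⨅ y : {y : EuclideanSpace ℝ q // y ≠ 0},
        arccos (|⟪(x : EuclideanSpace ℝ p),
          (toEuclideanLin (Xᵀ * W * Y)).toContinuousLinearMap y⟫| /
            (‖(x : EuclideanSpace ℝ p)‖ * ‖(y : EuclideanSpace ℝ q)‖)) := by
  refine ((Matrix.nonzeroEuclideanEquivSpanRange hX).iSup_congr fun x => ?_).symm
  refine ((Matrix.nonzeroEuclideanEquivSpanRange hY).iInf_congr fun y => ?_).symm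
  simp only [Matrix.coe_nonzeroEuclideanEquivSpanRange_apply,
    mulVec_dotProduct_mulVec_mulVec, hX, hY, one_mulVec, LinearMap.coe_toContinuousLinearMap',
    norm_eq_sqrt_real_inner, EuclideanSpace.inner_eq_star_dotProduct, star_trivial,
    toLpLin_apply, dotProduct_comm (ofLp (x : EuclideanSpace ℝ p))]

theorem subspaceDist_span_range_of_isEmpty {n : ℕ} {p : Type*} [Fintype p] [IsEmpty p]
    (W : Matrix (Fin n) (Fin n) ℝ) (X : Matrix (Fin n) p ℝ) (G : Submodule ℝ (Fin n → ℝ)) :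
    subspaceDist W (Submodule.span ℝ (Set.range Xᵀ)) G = 0 := by
  have : IsEmpty {u : Fin n → ℝ // u ∈ Submodule.span ℝ (Set.range Xᵀ) ∧ u ≠ 0} := by
    refine ⟨fun u => u.2.2 ?_⟩
    obtain ⟨c, hc⟩ := (Submodule.mem_span_range_iff_exists_fun ℝ).1 u.2.1
    rw [← hc, Finset.univ_eq_empty, Finset.sum_empty]
  rw [subspaceDist, maxCanonicalAngle, Real.iSup_of_isEmpty, sin_zero]

theorem dist_subspaces_eq_spectralNorm_general {n k : ℕ} (hkn : k ≤ n)
    (N : Matrix (Fin n) (Fin n) ℝ)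
    (F₁ G₁ : Matrix (Fin n) (Fin k) ℝ)
    (F₂ G₂ : Matrix (Fin n) (Fin (n - k)) ℝ)
    (hF : (Matrix.fromCols F₁ F₂)ᵀ * N⁻¹ * Matrix.fromCols F₁ F₂ = 1)
    (hG : (Matrix.fromCols G₁ G₂)ᵀ * N⁻¹ * Matrix.fromCols G₁ G₂ = 1) :
    subspaceDist N⁻¹ (Submodule.span ℝ (Set.range F₁ᵀ))
        (Submodule.span ℝ (Set.range G₁ᵀ)) =
      matrixSpectralNorm (F₂ᵀ * N⁻¹ * G₁) := by
  rcases isEmpty_or_nonempty (Fin k) with hk | hk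
  · rw [subspaceDist_span_range_of_isEmpty, matrixSpectralNorm,
      ContinuousLinearMap.opNorm_subsingleton]
  have hG₁ := transpose_mul_mul_eq_one_of_fromCols hG
  have hPQ := norm_toEuclideanLin_sq_add_norm_toEuclideanLin_sq <|
    transpose_mul_self_add_of_fromCols (finSumFinEquiv.trans (finCongr (Nat.add_sub_cancel' hkn)))
      hF hG₁
  rw [subspaceDist, maxCanonicalAngle_span_range (transpose_mul_mul_eq_one_of_fromCols hF) hG₁,
    iSup_iInf_arccos_abs_inner_apply_div, ContinuousLinearMap.minimumModulus_adjoint, sin_arccos]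
  exact (ContinuousLinearMap.norm_eq_sqrt_one_sub_minimumModulus_sq _ _ hPQ).symm

/-- If `(F₁, F₂)` and `(G₁, G₂)` are `N⁻¹`-orthonormal bases of `ℝⁿ` with
`F₁, G₁ ∈ ℝ^{n×k}`, and `F = span(F₁)`, `G = span(G₁)`, then
`dist(F, G) = ‖F₂ᵀ N⁻¹ G₁‖₂`. -/
theorem dist_subspaces_eq_spectralNorm {n k : ℕ} (hkn : k ≤ n)
    (N : Matrix (Fin n) (Fin n) ℝ) (hN : N.PosDef)
    (F₁ G₁ : Matrix (Fin n) (Fin k) ℝ)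
    (F₂ G₂ : Matrix (Fin n) (Fin (n - k)) ℝ)
    (hF : (Matrix.fromCols F₁ F₂)ᵀ * N⁻¹ * Matrix.fromCols F₁ F₂ = 1)
    (hG : (Matrix.fromCols G₁ G₂)ᵀ * N⁻¹ * Matrix.fromCols G₁ G₂ = 1) :
    subspaceDist N⁻¹ (Submodule.span ℝ (Set.range F₁ᵀ))
        (Submodule.span ℝ (Set.range G₁ᵀ)) =
      matrixSpectralNorm (F₂ᵀ * N⁻¹ * G₁) :=
  dist_subspaces_eq_spectralNorm_general hkn N F₁ G₁ F₂ G₂ hF hG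
end

section
/- Let σ_1 > σ_2 > … > σ_r > 0 and 1 ≤ k ≤ r−1. Let H_{k1} ∈ ℝ^{k×k} have entries (H_{k1})_{ij} = σ_i^{2(j−1)} and H_{k2} ∈ ℝ^{(r−k)×k} have entries (H_{k2})_{ij} = σ_{k+i}^{2(j−1)}. Then ‖H_{k2} H_{k1}^{-1}‖_2 ≤ √(k(r−k)) · max_{1≤i≤k} |L_i^{(k)}(0)|, where L_i^{(k)}(λ) = Π_{l=1, l≠i}^{k} (λ − σ_l²)/(σ_i² − σ_l²) (with L_1^{(1)} ≡ 1 when k = 1) and ‖·‖_2 is the spectral norm. -/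
open Matrix

/-! Multiplying the Lagrange basis matrix `(L_j^{(k)}(σ_{k+i}²))` by the Vandermonde matrix `H_{k1}`
interpolates the monomials exactly, so `H_{k2} H_{k1}⁻¹` is that matrix. Since
`0 < σ_{k+i}² < σ_l²` for every node, `|σ_{k+i}² - σ_l²| ≤ |0 - σ_l²|` factor by factor, hence
every entry is at most `max_j |L_j^{(k)}(0)|`; finally the spectral norm is at most the Frobenius
norm, which is at most `√(pq)` times a bound on the entries of a `p × q` matrix. -/

lemma matrixSpectralNorm_le_sqrt_sum_sq {p q : ℕ} (A : Matrix (Fin p) (Fin q) ℝ) :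
    matrixSpectralNorm A ≤ √(∑ i, ∑ j, A i j ^ 2) := by
  refine ContinuousLinearMap.opNorm_le_bound _ (Real.sqrt_nonneg _) fun x => ?_
  have hrow (i : Fin p) : (A *ᵥ x) i ^ 2 ≤ (∑ j, A i j ^ 2) * ‖x‖ ^ 2 := by
    rw [EuclideanSpace.norm_sq_eq]
    simpa [mulVec, dotProduct] using Finset.sum_mul_sq_le_sq_mul_sq Finset.univ (A i) x
  calc ‖toEuclideanLin A x‖ = √(∑ i, (A *ᵥ x) i ^ 2) := by
        simp [EuclideanSpace.norm_eq]
    _ ≤ √((∑ i, ∑ j, A i j ^ 2) * ‖x‖ ^ 2) := by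
        rw [Finset.sum_mul]; exact Real.sqrt_le_sqrt (Finset.sum_le_sum fun i _ => hrow i)
    _ = √(∑ i, ∑ j, A i j ^ 2) * ‖x‖ := by
        rw [Real.sqrt_mul (by positivity), Real.sqrt_sq (norm_nonneg x)]

lemma matrixSpectralNorm_le_of_abs_le {p q : ℕ} (A : Matrix (Fin p) (Fin q) ℝ) {C : ℝ}
    (hC : 0 ≤ C) (h : ∀ i j, |A i j| ≤ C) :
    matrixSpectralNorm A ≤ √((p : ℝ) * q) * C := by
  refine (matrixSpectralNorm_le_sqrt_sum_sq A).trans ?_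
  calc √(∑ i, ∑ j, A i j ^ 2) ≤ √(∑ _i : Fin p, ∑ _j : Fin q, C ^ 2) :=
        Real.sqrt_le_sqrt <| Finset.sum_le_sum fun i _ => Finset.sum_le_sum fun j _ =>
          sq_le_sq' (abs_le.1 (h i j)).1 (abs_le.1 (h i j)).2
    _ = √((p : ℝ) * q) * C := by
        simp only [Finset.sum_const, Finset.card_univ, Fintype.card_fin, nsmul_eq_mul]
        rw [← mul_assoc, Real.sqrt_mul (by positivity), Real.sqrt_sq hC]

namespace Lagrange

open Polynomial

lemma eval_basis {F ι : Type*} [Field F] [DecidableEq ι] (s : Finset ι) (v : ι → F) (i : ι)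
    (x : F) : (Lagrange.basis s v i).eval x = ∏ l ∈ s.erase i, (x - v l) / (v i - v l) := by
  simp only [Lagrange.basis, basisDivisor, eval_prod, eval_mul, eval_C, eval_sub, eval_X]
  exact Finset.prod_congr rfl fun l _ => by rw [div_eq_inv_mul]

lemma abs_eval_basis_le_abs_eval_basis_zero {ι : Type*} [DecidableEq ι] (s : Finset ι)
    (v : ι → ℝ) (i : ι) {x : ℝ} (hx : 0 ≤ x) (hxv : ∀ l ∈ s.erase i, x ≤ v l) :
    |(Lagrange.basis s v i).eval x| ≤ |(Lagrange.basis s v i).eval 0| := by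
  simp only [eval_basis, Finset.abs_prod, abs_div]
  refine Finset.prod_le_prod (fun _ _ => by positivity) fun l hl => ?_
  refine div_le_div_of_nonneg_right ?_ (abs_nonneg _)
  rw [abs_of_nonpos (by linarith [hxv l hl]), abs_of_nonpos (by linarith [hxv l hl])]
  linarith

lemma of_eval_basis_mul_vandermonde {F : Type*} [Field F] {k m : ℕ} {v : Fin k → F}
    (hv : Function.Injective v) (x : Fin m → F) :
    (of fun i j => (Lagrange.basis Finset.univ v j).eval (x i)) * vandermonde v =
      of fun (i : Fin m) (j : Fin k) => x i ^ (j : ℕ) := by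
  ext i j
  have hdeg : (X ^ (j : ℕ) : F[X]).degree < (Finset.univ : Finset (Fin k)).card := by simp
  have := congrArg (eval (x i)) (eq_interpolate (v := v) hv.injOn hdeg)
  simp only [interpolate_apply, eval_finsetSum, eval_mul, eval_C, eval_pow, eval_X] at this
  simp [mul_apply, vandermonde_apply, this, mul_comm]

lemma of_eval_basis_eq_mul_inv_vandermonde {F : Type*} [Field F] {k m : ℕ} {v : Fin k → F}
    (hv : Function.Injective v) (x : Fin m → F) :
    (of fun (i : Fin m) (j : Fin k) => x i ^ (j : ℕ)) * (vandermonde v)⁻¹ =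
      of fun i j => (Lagrange.basis Finset.univ v j).eval (x i) := by
  rw [← of_eval_basis_mul_vandermonde hv x, mul_nonsing_inv_cancel_right]
  exact isUnit_iff_ne_zero.2 (det_vandermonde_ne_zero_iff.2 hv)

end Lagrange

/-- For distinct `σ_1 > … > σ_r > 0` and `1 ≤ k ≤ r−1`,
`‖H_{k2} H_{k1}⁻¹‖₂ ≤ √(k(r−k)) · max_{1≤i≤k} |L_i^{(k)}(0)|`, where `L_i^{(k)}` is the
`i`-th Lagrange basis polynomial at the nodes `σ_1², …, σ_k²`. (Indices are zero-based.) -/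
theorem norm_H2H1inv_bound (r k : ℕ) (hk1 : 1 ≤ k) (hkr : k < r)
    (σ : ℕ → ℝ)
    (hσpos : ∀ i, i < r → 0 < σ i)
    (hσdistinct : ∀ i j, i < j → j < r → σ j < σ i)
    (H₁ : Matrix (Fin k) (Fin k) ℝ)
    (hH₁ : H₁ = Matrix.of fun i j : Fin k => σ (i : ℕ) ^ (2 * (j : ℕ)))
    (H₂ : Matrix (Fin (r - k)) (Fin k) ℝ)
    (hH₂ : H₂ = Matrix.of fun (i : Fin (r - k)) (j : Fin k) =>
      σ (k + (i : ℕ)) ^ (2 * (j : ℕ))) :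
    matrixSpectralNorm (H₂ * H₁⁻¹) ≤
      Real.sqrt ((k : ℝ) * ((r : ℝ) - (k : ℝ))) *
        (Finset.univ.sup' ⟨(⟨0, hk1⟩ : Fin k), Finset.mem_univ _⟩
          fun i : Fin k =>
            |∏ l ∈ Finset.univ.erase i,
              ((0 - σ (l : ℕ) ^ 2) / (σ (i : ℕ) ^ 2 - σ (l : ℕ) ^ 2))|) := by
  have hsq : ∀ i j, i < j → j < r → σ j ^ 2 < σ i ^ 2 := fun i j hij hjr =>
    pow_lt_pow_left₀ (hσdistinct i j hij hjr) (hσpos j hjr).le two_ne_zero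
  set v : Fin k → ℝ := fun l => σ l ^ 2
  set x : Fin (r - k) → ℝ := fun i => σ (k + i) ^ 2
  have hv : StrictAnti v := fun a b hab => hsq a b hab (b.2.trans hkr)
  have hH : H₂ * H₁⁻¹ = of fun i j => (Lagrange.basis Finset.univ v j).eval (x i) := by
    rw [← Lagrange.of_eval_basis_eq_mul_inv_vandermonde hv.injective, hH₁, hH₂]
    simp only [vandermonde, x, v, pow_mul]
  rw [hH, ← Nat.cast_sub hkr.le, mul_comm (k : ℝ)]
  refine matrixSpectralNorm_le_of_abs_le _
    (Finset.le_sup'_of_le _ (Finset.mem_univ ⟨0, hk1⟩) (abs_nonneg _)) fun i j => ?_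
  refine (Lagrange.abs_eval_basis_le_abs_eval_basis_zero _ v j (sq_nonneg _) fun l _ =>
    (hsq l (k + i) (by omega) (by omega)).le).trans ?_
  rw [Lagrange.eval_basis]
  exact Finset.le_sup' (fun j : Fin k => |∏ l ∈ Finset.univ.erase j, (0 - v l) / (v j - v l)|)
    (Finset.mem_univ j)
end

section
/- Let α > 0, γ_0 > 0, and define σ_i = γ_0 e^{−α i} for i = 1,…,k with k ≥ 2. Then for every 1 ≤ i_0 ≤ k, Π_{j=1, j≠i_0}^{k} σ_j² / |σ_j² − σ_{i_0}²| ≤ ( e (k−1) / 2 )^{1/α} · e^{−α (k−i_0)(k−i_0+1)}. -/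
/-!
Put `r = e^{-2α}`, so that `σ_j² = γ₀² r^j`. The factor of the product at `j = i₀ - m` is
`(1 - r^m)⁻¹`, and at `j = i₀ + m` it is `r^m (1 - r^m)⁻¹`; the factors `r^m`, `1 ≤ m ≤ k - i₀`,
multiply to `e^{-α (k - i₀)(k - i₀ + 1)}`. For `k = 2` the claim is exactly
`(1 - e^{-2x})⁻¹ ≤ e^{(1 - log 2)/x}`, and this inequality, applied with `x = α m`, bounds the
remaining factors by `exp ((1 - log 2)(H_{i₀-1} + H_{k-i₀}) / α)`. Finally `H_n ≤ 1 + log n` and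
AM-GM give `(1 - log 2)(H_a + H_b) ≤ log (e (a + b) / 2)`.
-/

open Real Finset

theorem pow_div_abs_pow_sub_pow_add {r : ℝ} (hr₀ : 0 < r) (hr₁ : r ≤ 1) (i m : ℕ) :
    r ^ i / |r ^ i - r ^ (i + m)| = (1 - r ^ m)⁻¹ := by
  have hm : 0 ≤ 1 - r ^ m := sub_nonneg.2 (pow_le_one₀ hr₀.le hr₁)
  rw [pow_add, ← mul_one_sub, abs_mul, abs_of_pos (pow_pos hr₀ i), abs_of_nonneg hm,
    div_mul_cancel_left₀ (pow_pos hr₀ i).ne']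

theorem pow_add_div_abs_pow_add_sub_pow {r : ℝ} (hr₀ : 0 < r) (hr₁ : r ≤ 1) (i m : ℕ) :
    r ^ (i + m) / |r ^ (i + m) - r ^ i| = r ^ m * (1 - r ^ m)⁻¹ := by
  rw [abs_sub_comm, pow_add, mul_div_assoc, ← pow_div_abs_pow_sub_pow_add hr₀ hr₁ i m, pow_add]
  ring

theorem prod_erase_Icc_pow_div_abs_pow_sub_pow {r : ℝ} (hr₀ : 0 < r) (hr₁ : r ≤ 1) {i k : ℕ}
    (hik : i ≤ k) :
    ∏ j ∈ (Icc 1 k).erase i, r ^ j / |r ^ j - r ^ i| =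
      (∏ m ∈ Icc 1 (i - 1), (1 - r ^ m)⁻¹) * ∏ m ∈ Icc 1 (k - i), r ^ m * (1 - r ^ m)⁻¹ := by
  have hsplit : (Icc 1 k).erase i = Ico 1 i ∪ Ioc i k := by ext; simp; omega
  rw [hsplit, prod_union (disjoint_left.2 (by simp; omega))]
  congr 1
  · refine prod_nbij' (i - ·) (i - ·) (by intro j; simp; omega) (by intro j; simp; omega)
      (by intro j; simp; omega) (by intro j; simp; omega) fun j hj => ?_
    have hj : j ≤ i := (mem_Ico.1 hj).2.le
    simpa [Nat.add_sub_cancel' hj] using pow_div_abs_pow_sub_pow_add hr₀ hr₁ j (i - j)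
  · refine prod_nbij' (· - i) (· + i) (by intro j; simp; omega) (by intro j; simp; omega)
      (by intro j; simp; omega) (by intro j; simp) fun j hj => ?_
    have hj : i ≤ j := (mem_Ioc.1 hj).1.le
    simpa [Nat.add_sub_cancel' hj] using pow_add_div_abs_pow_add_sub_pow hr₀ hr₁ i (j - i)

theorem prod_Icc_exp_neg_pow (β : ℝ) (n : ℕ) :
    ∏ m ∈ Icc 1 n, exp (-β) ^ m = exp (-(β * (n * (n + 1) / 2))) := by
  induction n with
  | zero => simp
  | succ n ih =>
    rw [prod_Icc_succ_top (by omega), ih, ← exp_nat_mul, ← exp_add]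
    push_cast
    ring_nf

/-- The sharp constant is `(log 2)²`, at `p = q = log 2`; `14/25` is what the quadratic Taylor
bound for `exp` gives. -/
theorem mul_le_of_one_le_exp_neg_add_exp_neg {p q : ℝ} (hp : 0 ≤ p) (hq : 0 ≤ q)
    (h : 1 ≤ exp (-p) + exp (-q)) : p * q ≤ 14 / 25 := by
  have taylor : ∀ t : ℝ, 0 ≤ t → exp (-t) * (1 + t + t ^ 2 / 2) ≤ 1 := fun t ht => by
    rw [exp_neg, inv_mul_le_iff₀ (exp_pos t), mul_one]
    exact quadratic_le_exp_of_nonneg ht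
  -- `1 ≤ 1/A + 1/B` for the Taylor polynomials `A, B` means `(A - 1)(B - 1) ≤ 1`
  have hAB : p * q * (1 + p / 2) * (1 + q / 2) ≤ 1 := by
    nlinarith [exp_pos (-p), exp_pos (-q),
      mul_le_mul_of_nonneg_right (taylor p hp) (by positivity : (0:ℝ) ≤ 1 + q + q ^ 2 / 2),
      mul_le_mul_of_nonneg_right (taylor q hq) (by positivity : (0:ℝ) ≤ 1 + p + p ^ 2 / 2)]
  by_contra! hpq
  have hsum : 149 / 100 ≤ p + q := by nlinarith [sq_nonneg (p - q)]
  nlinarith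

theorem inv_one_sub_exp_neg_two_mul_le {x : ℝ} (hx : 0 < x) :
    (1 - exp (-(2 * x)))⁻¹ ≤ exp ((1 - log 2) / x) := by
  have hpos : 0 < 1 - exp (-(2 * x)) := by
    linarith [exp_lt_one_iff.2 (by linarith : -(2 * x) < 0)]
  set q := -log (1 - exp (-(2 * x))) with hq_def
  have hexp : exp (-q) = 1 - exp (-(2 * x)) := by rw [hq_def, neg_neg, exp_log hpos]
  have hq : 0 ≤ q := neg_nonneg.2 (log_nonpos hpos.le (by linarith [exp_pos (-(2 * x))]))
  have hxq := mul_le_of_one_le_exp_neg_add_exp_neg (p := 2 * x) (by positivity) hq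
    (by rw [hexp]; linarith)
  rw [← hexp, ← exp_neg, neg_neg]
  gcongr
  rw [le_div_iff₀ hx]
  linarith [log_two_lt_d9]

theorem prod_inv_one_sub_exp_neg_two_mul_pow_le {α : ℝ} (hα : 0 < α) (n : ℕ) :
    ∏ m ∈ Icc 1 n, (1 - exp (-(2 * α)) ^ m)⁻¹ ≤ exp ((1 - log 2) / α * harmonic n) := by
  calc ∏ m ∈ Icc 1 n, (1 - exp (-(2 * α)) ^ m)⁻¹
      ≤ ∏ m ∈ Icc 1 n, exp ((1 - log 2) / (α * m)) := by
        refine prod_le_prod (fun m _ => ?_) (fun m hm => ?_)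
        · rw [← exp_nat_mul, inv_nonneg, sub_nonneg, exp_le_one_iff]
          exact mul_nonpos_of_nonneg_of_nonpos m.cast_nonneg (by linarith)
        · have hm : (0:ℝ) < m := Nat.cast_pos.2 (mem_Icc.1 hm).1
          rw [← exp_nat_mul, show (m * -(2 * α)) = -(2 * (α * m)) by ring]
          exact inv_one_sub_exp_neg_two_mul_le (by positivity)
    _ = exp ((1 - log 2) / α * harmonic n) := by
        rw [← exp_sum, harmonic_eq_sum_Icc]
        push_cast
        rw [mul_sum]
        refine congrArg exp (sum_congr rfl fun m _ => ?_)
        field_simp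

theorem one_sub_log_two_mul_harmonic_add_le (a b : ℕ) (hab : 1 ≤ a + b) :
    (1 - log 2) * ((harmonic a : ℝ) + harmonic b) ≤ log (exp 1 * (a + b) / 2) := by
  wlog hle : a ≤ b generalizing a b
  · rw [add_comm (harmonic a : ℝ), add_comm (a : ℝ)]
    exact this b a (by omega) (by omega)
  have hlog2 := log_two_lt_d9
  have hlog2' := log_two_gt_d9
  have hb : (1:ℝ) ≤ b := by exact_mod_cast (show 1 ≤ b by omega)
  rw [log_div (by positivity) two_ne_zero, log_mul (exp_ne_zero 1) (by positivity), log_exp]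
  rcases Nat.eq_zero_or_pos a with rfl | ha
  · have hHb := harmonic_le_one_add_log b
    have := log_nonneg hb
    simp only [harmonic_zero, Rat.cast_zero, zero_add, Nat.cast_zero]
    nlinarith
  · have ha : (1:ℝ) ≤ a := by exact_mod_cast ha
    have hamgm : log a + log b ≤ 2 * (log (a + b) - log 2) := by
      rw [← log_mul (by positivity) (by positivity), ← log_div (by positivity) two_ne_zero,
        ← log_rpow (by positivity)]
      exact log_le_log (by positivity) (by norm_num; nlinarith [sq_nonneg ((a:ℝ) - b)])
    have hL : 0 ≤ log (a + b) - log 2 := by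
      rw [← log_div (by positivity) two_ne_zero]; exact log_nonneg (by linarith)
    nlinarith [harmonic_le_one_add_log a, harmonic_le_one_add_log b]

/-- Under the exponential decay model `σ_i = γ₀ e^{−α i}`, for every
`1 ≤ i₀ ≤ k` (with `k ≥ 2`):
`Π_{j=1, j≠i₀}^{k} σ_j² / |σ_j² − σ_{i₀}²| ≤ (e(k−1)/2)^{1/α} · e^{−α(k−i₀)(k−i₀+1)}`. -/
theorem lagrange_at_zero_bound (α γ₀ : ℝ) (hα : 0 < α) (hγ₀ : 0 < γ₀)
    (k : ℕ) (hk : 2 ≤ k)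
    (σ : ℕ → ℝ) (hσ : ∀ i, σ i = γ₀ * Real.exp (-(α * (i : ℝ))))
    (i₀ : ℕ) (hi₀1 : 1 ≤ i₀) (hi₀k : i₀ ≤ k) :
    ∏ j ∈ (Finset.Icc 1 k).erase i₀, σ j ^ 2 / |σ j ^ 2 - σ i₀ ^ 2| ≤
      (Real.exp 1 * ((k : ℝ) - 1) / 2) ^ (1 / α) *
        Real.exp (-(α * ((k : ℝ) - (i₀ : ℝ)) * ((k : ℝ) - (i₀ : ℝ) + 1))) := by
  set r := exp (-(2 * α))
  have hr₀ : 0 < r := exp_pos _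
  have hr₁ : r ≤ 1 := exp_le_one_iff.2 (by linarith)
  have hσ_sq : ∀ j : ℕ, σ j ^ 2 = γ₀ ^ 2 * r ^ j := fun j => by
    rw [hσ, mul_pow, ← exp_nat_mul, ← exp_nat_mul]; push_cast; ring_nf
  have hfactor : ∀ j : ℕ, σ j ^ 2 / |σ j ^ 2 - σ i₀ ^ 2| = r ^ j / |r ^ j - r ^ i₀| := fun j => by
    rw [hσ_sq, hσ_sq, ← mul_sub, abs_mul, abs_of_pos (by positivity),
      mul_div_mul_left _ _ (by positivity)]
  have hk' : (2 : ℝ) ≤ k := by exact_mod_cast hk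
  have hb : ((k - i₀ : ℕ) : ℝ) = k - i₀ := Nat.cast_sub hi₀k
  have hab : ((i₀ - 1 : ℕ) : ℝ) + (k - i₀ : ℕ) = k - 1 := by
    rw [hb, Nat.cast_sub hi₀1]; push_cast; ring
  have hH : (1 - log 2) / α * harmonic (i₀ - 1) + (1 - log 2) / α * harmonic (k - i₀) ≤
      log (exp 1 * (k - 1) / 2) * (1 / α) := by
    rw [← mul_add, div_mul_eq_mul_div, mul_one_div, ← hab]
    exact div_le_div_of_nonneg_right (one_sub_log_two_mul_harmonic_add_le _ _ (by omega)) hα.le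
  rw [prod_congr rfl fun j _ => hfactor j, prod_erase_Icc_pow_div_abs_pow_sub_pow hr₀ hr₁ hi₀k,
    prod_mul_distrib, prod_Icc_exp_neg_pow, rpow_def_of_pos (by nlinarith [exp_pos 1]), ← exp_add]
  calc _ ≤ exp ((1 - log 2) / α * harmonic (i₀ - 1)) *
        (exp (-(2 * α * ((k - i₀ : ℕ) * ((k - i₀ : ℕ) + 1) / 2))) *
          exp ((1 - log 2) / α * harmonic (k - i₀))) :=
        mul_le_mul (prod_inv_one_sub_exp_neg_two_mul_pow_le hα _)
          (mul_le_mul_of_nonneg_left (prod_inv_one_sub_exp_neg_two_mul_pow_le hα _) (exp_pos _).le)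
          (mul_nonneg (exp_pos _).le
            (prod_nonneg fun m _ => inv_nonneg.2 (sub_nonneg.2 (pow_le_one₀ hr₀.le hr₁))))
          (exp_pos _).le
    _ ≤ _ := by
        rw [← exp_add, ← exp_add, exp_le_exp, hb]
        linarith
end

section
/- Let C ∈ ℝ^{n×n} be symmetric positive semidefinite and d ∈ range(C). Suppose the k-step Lanczos relations hold: C Q_k = Q_k T_k + δ_{k+1} q_{k+1} e_kᵀ and δ_1 q_1 = d, where Q_k = (q_1,…,q_k), the vectors q_1,…,q_{k+1} are orthonormal in ℝ^n, T_k ∈ ℝ^{k×k} is symmetric tridiagonal and invertible, and e_k is the k-th column of the identity matrix of order k. Let f* be the unique vector in range(C) with C f* = d (i.e. f* = C^† d), and let R_k be the normalized characteristic polynomial of T_k, R_k(t) = det(T_k − t I)/det(T_k), so that R_k(0) = 1. Then the k-th conjugate gradient iterate f_k = Q_k T_k^{-1} δ_1 e_1 satisfies f_k = (I − R_k(C)) f*, where R_k(C) denotes the evaluation of the polynomial R_k at the matrix C. -/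
/-!
Since `R(0) = 1`, we can write `1 - R = S X` with `deg S < k`, and Cayley–Hamilton gives
`R(T) = 0`, hence `T⁻¹ = S(T)`. Because `T` is upper Hessenberg, `Tʲ e₁` vanishes below
position `j + 1`, so for `j < k - 1` the residual term `δ q eₖᵀ` of the Lanczos relation kills
it and `C (Q Tʲ e₁) = Q Tʲ⁺¹ e₁`. Thus `Cʲ Q e₁ = Q Tʲ e₁` for `j < k`, i.e. `p(C) Q e₁ = Q p(T) e₁`
for `deg p < k`, and
`f_k = Q S(T) δ₁ e₁ = S(C) d = S(C) C f* = (1 - R(C)) f*`.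
-/

open Matrix Polynomial

section Krylov

variable {R : Type*} [CommRing R] {m n : Type*} [Fintype m] [Fintype n] [DecidableEq m]
  [DecidableEq n]

theorem pow_mulVec_mulVec_of_forall_lt {C : Matrix m m R} {Q : Matrix m n R}
    {T : Matrix n n R} {v : n → R} {j : ℕ}
    (hres : ∀ i < j, (C * Q - Q * T) *ᵥ (T ^ i *ᵥ v) = 0) :
    C ^ j *ᵥ (Q *ᵥ v) = Q *ᵥ (T ^ j *ᵥ v) := by
  induction j with
  | zero => simp
  | succ j ih =>
    have hstep : C *ᵥ (Q *ᵥ (T ^ j *ᵥ v)) = Q *ᵥ (T *ᵥ (T ^ j *ᵥ v)) := by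
      simpa only [sub_mulVec, sub_eq_zero, ← mulVec_mulVec] using hres j j.lt_succ_self
    rw [pow_succ', ← mulVec_mulVec, ih fun i hi => hres i (by omega), hstep, pow_succ',
      ← mulVec_mulVec]

theorem aeval_mulVec_mulVec_of_natDegree_lt {C : Matrix m m R} {Q : Matrix m n R}
    {T : Matrix n n R} {v : n → R} {k : ℕ}
    (hpow : ∀ i < k, C ^ i *ᵥ (Q *ᵥ v) = Q *ᵥ (T ^ i *ᵥ v)) {p : R[X]} (hp : p.natDegree < k) :
    aeval C p *ᵥ (Q *ᵥ v) = Q *ᵥ (aeval T p *ᵥ v) := by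
  simp only [aeval_eq_sum_range' hp, sum_mulVec, mulVec_sum, smul_mulVec, mulVec_smul]
  exact Finset.sum_congr rfl fun i hi => by rw [hpow i (Finset.mem_range.mp hi)]

end Krylov

theorem vecMulVec_mulVec_eq_zero {α m n : Type*} [NonUnitalSemiring α] [Fintype n]
    (u : m → α) {v w : n → α} (hvw : ∀ j, v j = 0 ∨ w j = 0) : vecMulVec u v *ᵥ w = 0 := by
  have : v ⬝ᵥ w = 0 := Finset.sum_eq_zero fun j _ => by rcases hvw j with h | h <;> simp [h]
  rw [vecMulVec_mulVec, this, MulOpposite.op_zero, zero_smul]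

section Hessenberg

variable {α : Type*} {k : ℕ} {T : Matrix (Fin k) (Fin k) α}

theorem mulVec_apply_eq_zero_of_hessenberg [NonUnitalNonAssocSemiring α]
    (hT : ∀ i j : Fin k, (j : ℕ) + 1 < i → T i j = 0) {v : Fin k → α} {m : ℕ}
    (hv : ∀ i : Fin k, m < i → v i = 0) (i : Fin k) (hi : m + 1 < i) : (T *ᵥ v) i = 0 := by
  rw [mulVec, dotProduct]
  refine Finset.sum_eq_zero fun j _ => ?_
  by_cases hj : m < (j : ℕ)
  · rw [hv j hj, mul_zero]
  · rw [hT i j (by omega), zero_mul]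

theorem pow_mulVec_apply_eq_zero_of_hessenberg [Semiring α]
    (hT : ∀ i j : Fin k, (j : ℕ) + 1 < i → T i j = 0) {v : Fin k → α} {m : ℕ}
    (hv : ∀ i : Fin k, m < i → v i = 0) (j : ℕ) (i : Fin k) (hi : m + j < i) :
    (T ^ j *ᵥ v) i = 0 := by
  induction j generalizing i with
  | zero => simpa using hv i hi
  | succ j ih =>
    rw [pow_succ', ← mulVec_mulVec]
    exact mulVec_apply_eq_zero_of_hessenberg hT ih i (by omega)

end Hessenberg

theorem pow_mulVec_mulVec_of_lanczos {R : Type*} [CommRing R] {m : Type*} [Fintype m]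
    [DecidableEq m] {k : ℕ} {C : Matrix m m R} {Q : Matrix m (Fin k) R}
    {T : Matrix (Fin k) (Fin k) R} {u : m → R} {c : R}
    (hT : ∀ i j : Fin k, (j : ℕ) + 1 < i → T i j = 0)
    (hres : C * Q = Q * T + c • vecMulVec u (fun j : Fin k => if (j : ℕ) = k - 1 then 1 else 0))
    {v : Fin k → R} (hv : ∀ i : Fin k, 0 < (i : ℕ) → v i = 0) :
    ∀ j < k, C ^ j *ᵥ (Q *ᵥ v) = Q *ᵥ (T ^ j *ᵥ v) := by
  refine fun j hj => pow_mulVec_mulVec_of_forall_lt fun i hi => ?_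
  rw [sub_eq_iff_eq_add'.mpr hres, smul_mulVec, vecMulVec_mulVec_eq_zero, smul_zero]
  intro l
  by_cases hl : (l : ℕ) = k - 1
  · exact Or.inr (pow_mulVec_apply_eq_zero_of_hessenberg hT hv i l (by omega))
  · exact Or.inl (if_neg hl)

theorem divX_one_sub_mul_X {S : Type*} [Ring S] {p : S[X]} (hp : p.coeff 0 = 1) :
    (1 - p).divX * X = 1 - p := by
  have h := divX_mul_X_add (1 - p)
  rwa [coeff_sub, coeff_one_zero, hp, sub_self, C_0, add_zero] at h

section NormalizedCharpoly

variable {K : Type*} [Field K] {ι : Type*} [Fintype ι] [DecidableEq ι]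
  {T : Matrix ι ι K} {R : K[X]}

theorem eq_smul_charpoly_of_eval_eq [Infinite K] (hR : ∀ t, R.eval t = (T - t • 1).det / T.det) :
    R = ((-1) ^ Fintype.card ι / T.det) • T.charpoly := by
  refine Polynomial.funext fun t => ?_
  rw [hR, eval_smul, eval_charpoly, smul_eq_mul, ← neg_sub, det_neg, smul_one_eq_diagonal]
  simp [Matrix.scalar_apply]
  ring

theorem aeval_self_eq_zero_of_eval_eq [Infinite K]
    (hR : ∀ t, R.eval t = (T - t • 1).det / T.det) : aeval T R = 0 := by
  rw [eq_smul_charpoly_of_eval_eq hR, map_smul, aeval_self_charpoly, smul_zero]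

theorem natDegree_le_of_eval_eq [Infinite K] (hR : ∀ t, R.eval t = (T - t • 1).det / T.det) :
    R.natDegree ≤ Fintype.card ι := by
  rw [eq_smul_charpoly_of_eval_eq hR]
  exact (natDegree_smul_le _ _).trans T.charpoly_natDegree_eq_dim.le

theorem coeff_zero_eq_one_of_eval_eq (hR : ∀ t, R.eval t = (T - t • 1).det / T.det)
    (hT : T.det ≠ 0) : R.coeff 0 = 1 := by
  rw [coeff_zero_eq_eval_zero, hR, zero_smul, sub_zero, div_self hT]

theorem inv_eq_aeval_divX_one_sub [Infinite K]
    (hR : ∀ t, R.eval t = (T - t • 1).det / T.det) (hT : T.det ≠ 0) :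
    T⁻¹ = aeval T (1 - R).divX := by
  apply inv_eq_left_inv
  have h := congrArg (aeval T) (divX_one_sub_mul_X (coeff_zero_eq_one_of_eval_eq hR hT))
  rwa [map_mul, aeval_X, map_sub, map_one, aeval_self_eq_zero_of_eval_eq hR, sub_zero] at h

end NormalizedCharpoly

theorem cg_filter_polynomial_general {n k : ℕ} (hk : 1 ≤ k)
    (C : Matrix (Fin n) (Fin n) ℝ)
    (d : Fin n → ℝ)
    (Q : Matrix (Fin n) (Fin k) ℝ) (qk1 : Fin n → ℝ)
    (T : Matrix (Fin k) (Fin k) ℝ) (δ : ℕ → ℝ)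
    (hTtri : ∀ i j : Fin k, ((i : ℕ) + 1 < (j : ℕ) ∨ (j : ℕ) + 1 < (i : ℕ)) → T i j = 0)
    (hTunit : IsUnit T.det)
    (hlanczos : C * Q = Q * T + δ (k + 1) • Matrix.vecMulVec qk1
      (fun j : Fin k => if (j : ℕ) = k - 1 then (1 : ℝ) else 0))
    (hstart : δ 1 • Qᵀ (⟨0, hk⟩ : Fin k) = d)
    (fstar : Fin n → ℝ)
    (hfstar : C *ᵥ fstar = d)
    (R : Polynomial ℝ)
    (hR : ∀ t : ℝ, R.eval t = (T - t • (1 : Matrix (Fin k) (Fin k) ℝ)).det / T.det) :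
    Q *ᵥ (T⁻¹ *ᵥ (δ 1 • fun j : Fin k => if (j : ℕ) = 0 then (1 : ℝ) else 0)) =
      (1 - Polynomial.aeval C R) *ᵥ fstar := by
  set e₁ : Fin k → ℝ := fun j => if (j : ℕ) = 0 then 1 else 0
  set S := (1 - R).divX
  have hS : S * X = 1 - R := divX_one_sub_mul_X (coeff_zero_eq_one_of_eval_eq hR hTunit.ne_zero)
  have hSdeg : S.natDegree < k := by
    have hRdeg := natDegree_le_of_eval_eq hR
    have := natDegree_sub_le 1 R
    rw [natDegree_divX_eq_natDegree_tsub_one]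
    simp only [natDegree_one, Fintype.card_fin] at hRdeg this
    omega
  have hkrylov := pow_mulVec_mulVec_of_lanczos (fun i j hij => hTtri i j (Or.inr hij)) hlanczos
    (v := δ 1 • e₁) fun i hi => by simp [e₁, hi.ne']
  have hd : Q *ᵥ (δ 1 • e₁) = d := by
    have he₁ : e₁ = Pi.single ⟨0, hk⟩ 1 := by
      ext j
      simp [e₁, Pi.single_apply, Fin.ext_iff]
    rw [← hstart, mulVec_smul, he₁, mulVec_single_one]
    rfl
  calc Q *ᵥ (T⁻¹ *ᵥ (δ 1 • e₁)) = aeval C S *ᵥ (Q *ᵥ (δ 1 • e₁)) := by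
        rw [inv_eq_aeval_divX_one_sub hR hTunit.ne_zero,
          aeval_mulVec_mulVec_of_natDegree_lt hkrylov hSdeg]
    _ = (aeval C S * C) *ᵥ fstar := by rw [hd, ← hfstar, mulVec_mulVec]
    _ = (1 - aeval C R) *ᵥ fstar := by
        congr 1
        simpa only [map_mul, aeval_X, map_sub, map_one] using congrArg (aeval C) hS

/-- For a symmetric positive semidefinite `C` and `d ∈ range(C)`, if the
`k`-step Lanczos relations hold with orthonormal `q_1,…,q_{k+1}`, symmetric tridiagonal
invertible `T_k`, then the `k`-th CG iterate `f_k = Q_k T_k⁻¹ δ_1 e_1` satisfies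
`f_k = (I − R_k(C)) f*`, where `f* = C† d` is the unique vector in `range(C)` with
`C f* = d` and `R_k(t) = det(T_k − t I)/det(T_k)` is the normalized characteristic
polynomial of `T_k`. -/
theorem cg_filter_polynomial {n k : ℕ} (hk : 1 ≤ k)
    (C : Matrix (Fin n) (Fin n) ℝ) (hC : C.PosSemidef)
    (d : Fin n → ℝ)
    (Q : Matrix (Fin n) (Fin k) ℝ) (qk1 : Fin n → ℝ)
    (T : Matrix (Fin k) (Fin k) ℝ) (δ : ℕ → ℝ)
    (horth : ∀ i j : Fin k, Qᵀ i ⬝ᵥ Qᵀ j = if i = j then (1 : ℝ) else 0)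
    (horth' : ∀ i : Fin k, Qᵀ i ⬝ᵥ qk1 = 0)
    (hqnorm : qk1 ⬝ᵥ qk1 = 1)
    (hTsymm : Tᵀ = T)
    (hTtri : ∀ i j : Fin k, ((i : ℕ) + 1 < (j : ℕ) ∨ (j : ℕ) + 1 < (i : ℕ)) → T i j = 0)
    (hTunit : IsUnit T.det)
    (hlanczos : C * Q = Q * T + δ (k + 1) • Matrix.vecMulVec qk1
      (fun j : Fin k => if (j : ℕ) = k - 1 then (1 : ℝ) else 0))
    (hstart : δ 1 • Qᵀ (⟨0, hk⟩ : Fin k) = d)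
    (fstar : Fin n → ℝ)
    (hfstar_mem : ∃ w, C *ᵥ w = fstar)
    (hfstar : C *ᵥ fstar = d)
    (R : Polynomial ℝ)
    (hR : ∀ t : ℝ, R.eval t = (T - t • (1 : Matrix (Fin k) (Fin k) ℝ)).det / T.det) :
    Q *ᵥ (T⁻¹ *ᵥ (δ 1 • fun j : Fin k => if (j : ℕ) = 0 then (1 : ℝ) else 0)) =
      (1 - Polynomial.aeval C R) *ᵥ fstar :=
  cg_filter_polynomial_general hk C d Q qk1 T δ hTtri hTunit hlanczos hstart fstar hfstar R hR
end

section
/- Assume the GSVD setup and suppose the gen-GKB matrix relations hold through step k: β_1 U_{k+1} e_1 = b, A V_k = U_{k+1} B_k, N Aᵀ M^{-1} U_{k+1} = V_k B_kᵀ + α_{k+1} v_{k+1} e_{k+1}ᵀ, with U_{k+1}ᵀ M^{-1} U_{k+1} = I, V_kᵀ N^{-1} V_k = I, v_{k+1}ᵀ N^{-1} V_k = 0, and B_k ∈ ℝ^{(k+1)×k} lower bidiagonal with diagonal α_1,…,α_k and subdiagonal β_2,…,β_{k+1}, all α_i, β_i > 0. Suppose B_kᵀ B_k is invertible with eigenvalues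 (θ_1^{(k)})² > (θ_2^{(k)})² > … > (θ_k^{(k)})² > 0, i.e. det(t I − B_kᵀ B_k) = Π_{j=1}^{k} (t − (θ_j^{(k)})²). Then the k-th subspace projection regularized solution x_k = V_k (B_kᵀ B_k)^{-1} B_kᵀ (β_1 e_1) admits the filtered GSVD expansion x_k = Σ_{i=1}^{r} f_i^{(k)} ((u_{A,i}ᵀ L_M b)/σ_i) z_i with filter factors f_i^{(k)} = 1 − Π_{j=1}^{k} ((θ_j^{(k)})² − γ_i²)/(θ_j^{(k)})², where γ_i = σ_i. -/
/-!
Write `G = BᵀB`, `χ` for its characteristic polynomial and `P = N Aᵀ M⁻¹`. Since `χ(0) ≠ 0`,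
Cayley–Hamilton gives `G⁻¹ = ψ(G)` for the polynomial `ψ` of degree `< k` with
`t ψ(t) = 1 - χ(t) / χ(0)`. The gen-GKB relations give `P A V = V G + (rank one)`, where the
rank-one term only sees the last coordinate of `B x`; as `G` is tridiagonal, `G^j (Bᵀ e₁)` does
not reach that coordinate for `j < k - 1`, so `(P A)^j V Bᵀ e₁ = V G^j Bᵀ e₁` for `j < k` and
hence `x_k = ψ(P A) P b`. The GSVD diagonalizes `P A = Z (ΣᵀΣ) Z⁻¹` and `P = Z Σᵀ U_Aᵀ L_M`,
so `ψ(P A) P b = ∑ σᵢ² ψ(σᵢ²) (u_{A,i}ᵀ L_M b / σᵢ) zᵢ`, and `σᵢ² ψ(σᵢ²)` is the filter factor.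
-/

open Matrix Polynomial

namespace Polynomial

variable {K : Type*} [Field K]

noncomputable def invPoly (χ : K[X]) : K[X] := C (-(χ.coeff 0)⁻¹) * χ.divX

theorem X_mul_invPoly {χ : K[X]} (h : χ.coeff 0 ≠ 0) :
    X * invPoly χ = 1 - C (χ.coeff 0)⁻¹ * χ := by
  rw [invPoly, mul_left_comm, eq_sub_of_add_eq (X_mul_divX_add χ), mul_sub, ← C_mul,
    neg_mul, inv_mul_cancel₀ h, C_neg, C_neg, C_1]
  ring

theorem mul_eval_invPoly {χ : K[X]} (h : χ.coeff 0 ≠ 0) (t : K) :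
    t * (invPoly χ).eval t = 1 - χ.eval t / χ.coeff 0 := by
  simpa [div_eq_inv_mul] using congrArg (eval t) (X_mul_invPoly h)

theorem natDegree_invPoly_lt {χ : K[X]} (h : 0 < χ.natDegree) :
    (invPoly χ).natDegree < χ.natDegree :=
  (natDegree_C_mul_le _ _).trans_lt (by rw [natDegree_divX_eq_natDegree_tsub_one]; omega)

theorem eval_prod_X_sub_C_div_coeff_zero {ι : Type*} (s : Finset ι) (a : ι → K) (t : K) :
    (∏ j ∈ s, (X - C (a j))).eval t / (∏ j ∈ s, (X - C (a j))).coeff 0 =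
      ∏ j ∈ s, (a j - t) / a j := by
  rw [coeff_zero_eq_eval_zero, eval_prod, eval_prod, ← Finset.prod_div_distrib]
  refine Finset.prod_congr rfl fun j _ => ?_
  simp only [eval_sub, eval_X, eval_C, zero_sub, div_neg, ← neg_div, neg_sub]

end Polynomial

namespace Matrix

section Aeval

variable {K : Type*} [Field K] {n : Type*} [Fintype n] [DecidableEq n]

theorem inv_eq_aeval_invPoly (G : Matrix n n K) {χ : K[X]} (hχ : aeval G χ = 0)
    (h0 : χ.coeff 0 ≠ 0) : G⁻¹ = aeval G (invPoly χ) :=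
  inv_eq_right_inv <| by simpa [hχ] using congrArg (aeval G) (X_mul_invPoly h0)

theorem aeval_mul_mul_inv (Z S : Matrix n n K) (hZ : IsUnit Z.det) (p : K[X]) :
    aeval (Z * S * Z⁻¹) p = Z * aeval S p * Z⁻¹ := by
  have := aeval_algHom_apply (MulSemiringAction.toAlgEquiv K (Matrix n n K)
    (ConjAct.toConjAct ((isUnit_iff_isUnit_det Z).mpr hZ).unit)) S p
  simpa [ConjAct.units_smul_def] using this

theorem aeval_mulVec_of_mulVec_eq_smul {G : Matrix n n K} {v : n → K} {μ : K}
    (h : G *ᵥ v = μ • v) (p : K[X]) : aeval G p *ᵥ v = p.eval μ • v := by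
  have := Module.End.aeval_apply_of_mem_apply_eq_smul (f := toLinAlgEquiv' G) (p := p)
    (by rwa [toLinAlgEquiv'_apply])
  rwa [aeval_algHom_apply, toLinAlgEquiv'_apply] at this

end Aeval

section Bidiagonal

variable {R : Type*} [CommSemiring R] {k : ℕ}

theorem transpose_mul_self_apply_eq_zero {p : ℕ} {B : Matrix (Fin p) (Fin k) R}
    (hB : ∀ (i : Fin p) (j : Fin k), (i : ℕ) ≠ j → (i : ℕ) ≠ j + 1 → B i j = 0) {i l : Fin k}
    (h : (l : ℕ) + 2 ≤ i) : (Bᵀ * B) i l = 0 := by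
  rw [mul_apply]
  refine Finset.sum_eq_zero fun s _ => ?_
  by_cases hs : (s : ℕ) = i ∨ (s : ℕ) = i + 1
  · rw [hB s l (by omega) (by omega), mul_zero]
  · rw [transpose_apply, hB s i (by omega) (by omega), zero_mul]

theorem pow_mulVec_apply_eq_zero_of_lt {G : Matrix (Fin k) (Fin k) R}
    (hG : ∀ i l : Fin k, (l : ℕ) + 2 ≤ i → G i l = 0) {w : Fin k → R}
    (hw : ∀ i : Fin k, 0 < (i : ℕ) → w i = 0) (j : ℕ) {i : Fin k} (hi : j < i) :
    (G ^ j *ᵥ w) i = 0 := by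
  induction j generalizing i with
  | zero => simpa using hw i hi
  | succ j ih =>
    rw [pow_succ', ← mulVec_mulVec, mulVec, dotProduct]
    refine Finset.sum_eq_zero fun l _ => ?_
    by_cases hl : (l : ℕ) + 2 ≤ i
    · rw [hG i l hl, zero_mul]
    · rw [ih (by omega), mul_zero]

theorem lastIndicator_dotProduct_mulVec_eq_zero {B : Matrix (Fin (k + 1)) (Fin k) R}
    (hB : ∀ (i : Fin (k + 1)) (j : Fin k), (i : ℕ) ≠ j → (i : ℕ) ≠ j + 1 → B i j = 0)
    {x : Fin k → R} (hx : ∀ l : Fin k, (l : ℕ) + 1 = k → x l = 0) :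
    (fun i : Fin (k + 1) => if (i : ℕ) = k then (1 : R) else 0) ⬝ᵥ (B *ᵥ x) = 0 := by
  refine Finset.sum_eq_zero fun i _ => ?_
  dsimp only
  split_ifs with hi
  · rw [one_mul, mulVec, dotProduct]
    refine Finset.sum_eq_zero fun l _ => ?_
    by_cases hl : (l : ℕ) + 1 = k
    · rw [hx l hl, mul_zero]
    · rw [hB i l (by omega) (by omega), zero_mul]
  · exact zero_mul _

theorem mul_mulVec_mulVec_of_dotProduct_eq_zero {m n p : Type*} [Fintype m] [Fintype n]
    [Fintype p] {A : Matrix m n R} {P : Matrix n m R} {U : Matrix m p R}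
    {V : Matrix n (Fin k) R} {B : Matrix p (Fin k) R} {v : n → R} {ℓ : p → R}
    (hAV : A * V = U * B) (hPU : P * U = V * Bᵀ + vecMulVec v ℓ) {x : Fin k → R}
    (hx : ℓ ⬝ᵥ (B *ᵥ x) = 0) : (P * A) *ᵥ (V *ᵥ x) = V *ᵥ ((Bᵀ * B) *ᵥ x) := by
  rw [mulVec_mulVec, Matrix.mul_assoc, hAV, ← Matrix.mul_assoc, ← mulVec_mulVec, hPU,
    add_mulVec, vecMulVec_mulVec, hx, MulOpposite.op_zero, zero_smul, add_zero, mulVec_mulVec,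
    mulVec_mulVec, Matrix.mul_assoc]

end Bidiagonal

section Krylov

variable {R : Type*} [CommSemiring R] {k : ℕ} {m n : Type*} [Fintype m] [Fintype n]
  [DecidableEq n] {A : Matrix m n R} {P : Matrix n m R} {U : Matrix m (Fin (k + 1)) R}
  {V : Matrix n (Fin k) R} {B : Matrix (Fin (k + 1)) (Fin k) R} {v : n → R}
  (hB : ∀ (i : Fin (k + 1)) (j : Fin k), (i : ℕ) ≠ j → (i : ℕ) ≠ j + 1 → B i j = 0)
  (hAV : A * V = U * B)
  (hPU : P * U = V * Bᵀ + vecMulVec v (fun i : Fin (k + 1) => if (i : ℕ) = k then 1 else 0))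
include hB hAV hPU

theorem pow_mul_mulVec_mulVec {w : Fin k → R} (hw : ∀ i : Fin k, 0 < (i : ℕ) → w i = 0)
    {j : ℕ} (hj : j < k) : (P * A) ^ j *ᵥ (V *ᵥ w) = V *ᵥ ((Bᵀ * B) ^ j *ᵥ w) := by
  induction j with
  | zero => simp only [pow_zero, one_mulVec]
  | succ j ih =>
    have hsupp : ∀ l : Fin k, (l : ℕ) + 1 = k → ((Bᵀ * B) ^ j *ᵥ w) l = 0 := fun l hl =>
      pow_mulVec_apply_eq_zero_of_lt (fun _ _ => transpose_mul_self_apply_eq_zero hB) hw j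
        (by omega)
    rw [pow_succ', ← mulVec_mulVec _ (P * A), ih (by omega),
      mul_mulVec_mulVec_of_dotProduct_eq_zero hAV hPU
        (lastIndicator_dotProduct_mulVec_eq_zero hB hsupp),
      pow_succ', ← mulVec_mulVec _ (Bᵀ * B)]

theorem aeval_mul_mulVec_mulVec {w : Fin k → R} (hw : ∀ i : Fin k, 0 < (i : ℕ) → w i = 0)
    {q : R[X]} (hq : q.natDegree < k) :
    aeval (P * A) q *ᵥ (V *ᵥ w) = V *ᵥ (aeval (Bᵀ * B) q *ᵥ w) := by
  rw [aeval_eq_sum_range' hq, aeval_eq_sum_range' hq, sum_mulVec, sum_mulVec, mulVec_sum]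
  refine Finset.sum_congr rfl fun j hj => ?_
  rw [smul_mulVec, smul_mulVec, mulVec_smul, pow_mul_mulVec_mulVec hB hAV hPU hw
    (Finset.mem_range.mp hj)]

theorem mulVec_aeval_mulVec_transpose_mulVec (hk : 1 ≤ k) {b : m → R} {β : R}
    (hb : β • (U *ᵥ fun i : Fin (k + 1) => if (i : ℕ) = 0 then 1 else 0) = b)
    {q : R[X]} (hq : q.natDegree < k) :
    V *ᵥ (aeval (Bᵀ * B) q *ᵥ (Bᵀ *ᵥ (β • fun i : Fin (k + 1) => if (i : ℕ) = 0 then 1 else 0))) =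
      aeval (P * A) q *ᵥ (P *ᵥ b) := by
  set e₁ : Fin (k + 1) → R := fun i => if (i : ℕ) = 0 then 1 else 0
  have hPb : P *ᵥ b = β • (V *ᵥ (Bᵀ *ᵥ e₁)) := by
    have hℓ : (fun i : Fin (k + 1) => if (i : ℕ) = k then (1 : R) else 0) ⬝ᵥ e₁ = 0 :=
      Finset.sum_eq_zero fun i _ => by simp only [e₁]; split_ifs <;> first | omega | simp
    rw [← hb, mulVec_smul, mulVec_mulVec, hPU, add_mulVec, vecMulVec_mulVec, hℓ,
      MulOpposite.op_zero, zero_smul, add_zero, ← mulVec_mulVec]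
  have hw : ∀ i : Fin k, 0 < (i : ℕ) → (Bᵀ *ᵥ e₁) i = 0 := by
    intro i hi
    rw [mulVec, dotProduct]
    refine Finset.sum_eq_zero fun s _ => ?_
    simp only [transpose_apply, e₁]
    split_ifs with hs
    · rw [hB s i (by omega) (by omega), zero_mul]
    · exact mul_zero _
  simp only [hPb, mulVec_smul]
  rw [aeval_mul_mulVec_mulVec hB hAV hPU hw hq]

end Krylov

section GSVD

variable {K : Type*} [Field K] {m n : Type*} [Fintype m] [Fintype n] [DecidableEq m]
  [DecidableEq n] {A : Matrix m n K} {S : Matrix m n K} {M LM UA : Matrix m m K}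
  {N Z : Matrix n n K}

theorem eq_mul_transpose_of_transpose_mul_inv_mul_eq_one_s18 (h : Zᵀ * N⁻¹ * Z = 1) :
    N = Z * Zᵀ := by
  have h' : N⁻¹ * (Z * Zᵀ) = 1 := by
    rwa [mul_eq_one_comm, Matrix.mul_assoc, mul_eq_one_comm]
  have hN : IsUnit N.det := isUnit_nonsing_inv_det_iff.mp (isUnit_det_of_right_inverse h')
  rw [← nonsing_inv_nonsing_inv N hN, inv_eq_right_inv h']

/-- `N Aᵀ M⁻¹` is the adjoint of `A` for the inner products given by `N⁻¹` and `M⁻¹`. -/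
theorem gsvd_adjoint_eq (hZN : Zᵀ * N⁻¹ * Z = 1) (hLM : LMᵀ * LM = M⁻¹)
    (hgsvd : LM * A = UA * S * Z⁻¹) : N * Aᵀ * M⁻¹ = Z * Sᵀ * UAᵀ * LM := by
  have hZ : IsUnit Z.det := isUnit_det_of_left_inverse hZN
  calc N * Aᵀ * M⁻¹ = Z * (Zᵀ * (LM * A)ᵀ) * LM := by
        rw [eq_mul_transpose_of_transpose_mul_inv_mul_eq_one_s18 hZN, ← hLM, transpose_mul]
        simp only [Matrix.mul_assoc]
    _ = Z * ((Z⁻¹ * Z)ᵀ * (Sᵀ * UAᵀ)) * LM := by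
        rw [hgsvd, transpose_mul, transpose_mul, transpose_mul]
        simp only [Matrix.mul_assoc]
    _ = Z * Sᵀ * UAᵀ * LM := by
        rw [nonsing_inv_mul Z hZ, transpose_one, Matrix.one_mul]
        simp only [Matrix.mul_assoc]

theorem gsvd_adjoint_mul_eq (hZN : Zᵀ * N⁻¹ * Z = 1) (hLM : LMᵀ * LM = M⁻¹)
    (hUA : UAᵀ * UA = 1) (hgsvd : LM * A = UA * S * Z⁻¹) :
    N * Aᵀ * M⁻¹ * A = Z * (Sᵀ * S) * Z⁻¹ := by
  rw [gsvd_adjoint_eq hZN hLM hgsvd, Matrix.mul_assoc _ LM, hgsvd]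
  calc Z * Sᵀ * UAᵀ * (UA * S * Z⁻¹) = Z * Sᵀ * (UAᵀ * UA) * S * Z⁻¹ := by
        simp only [Matrix.mul_assoc]
    _ = Z * (Sᵀ * S) * Z⁻¹ := by
        rw [hUA, Matrix.mul_one]
        simp only [Matrix.mul_assoc]

end GSVD

section RectangularDiagonal

variable {K : Type*} [Field K] {m n r : ℕ} (hrm : r ≤ m) (hrn : r ≤ n) {σ : ℕ → K}
  {S : Matrix (Fin m) (Fin n) K}
  (hS : ∀ (i : Fin m) (j : Fin n), S i j = if (i : ℕ) = (j : ℕ) ∧ (i : ℕ) < r then σ i else 0)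
include hS

theorem mulVec_single_castLE (i : Fin r) :
    S *ᵥ Pi.single (Fin.castLE hrn i) 1 = σ i • Pi.single (Fin.castLE hrm i) 1 := by
  ext l
  simp only [mulVec_single_one, col_apply, hS, Pi.smul_apply, Pi.single_apply, Fin.ext_iff,
    Fin.val_castLE, smul_eq_mul]
  split_ifs <;> first | omega | simp_all

theorem transpose_mulVec_single_castLE (i : Fin r) :
    Sᵀ *ᵥ Pi.single (Fin.castLE hrm i) 1 = σ i • Pi.single (Fin.castLE hrn i) 1 := by
  ext l
  simp only [mulVec_single_one, col_apply, transpose_apply, hS, Pi.smul_apply, Pi.single_apply,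
    Fin.ext_iff, Fin.val_castLE, smul_eq_mul]
  split_ifs <;> first | omega | simp_all

theorem transpose_mulVec_eq_sum (y : Fin m → K) :
    Sᵀ *ᵥ y = ∑ i : Fin r, (σ i * y (Fin.castLE hrm i)) • Pi.single (Fin.castLE hrn i) 1 := by
  ext j
  rw [Finset.sum_apply]
  refine (Fintype.sum_of_injective _ (Fin.castLE_injective hrm) _ _ (fun i hi => ?_)
    fun i => ?_).symm
  · have hir : ¬ (i : ℕ) < r := fun h => hi ⟨⟨i, h⟩, rfl⟩
    simp [hS, hir]
  · simp [hS, Pi.single_apply, Fin.ext_iff, eq_comm]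

theorem aeval_transpose_mul_self_mulVec_transpose_mulVec (p : K[X]) (y : Fin m → K) :
    aeval (Sᵀ * S) p *ᵥ (Sᵀ *ᵥ y) =
      ∑ i : Fin r, (σ i * y (Fin.castLE hrm i) * p.eval (σ i ^ 2)) •
        Pi.single (Fin.castLE hrn i) 1 := by
  rw [transpose_mulVec_eq_sum hrm hrn hS, mulVec_sum]
  refine Finset.sum_congr rfl fun i _ => ?_
  have heig : (Sᵀ * S) *ᵥ Pi.single (Fin.castLE hrn i) 1 =
      σ i ^ 2 • Pi.single (Fin.castLE hrn i) 1 := by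
    rw [← mulVec_mulVec, mulVec_single_castLE hrm hrn hS, mulVec_smul,
      transpose_mulVec_single_castLE hrm hrn hS, smul_smul, sq]
  rw [mulVec_smul, aeval_mulVec_of_mulVec_eq_smul heig, smul_smul]

theorem aeval_gsvd_adjoint_mul_mulVec {A : Matrix (Fin m) (Fin n) K}
    {M LM UA : Matrix (Fin m) (Fin m) K} {N Z : Matrix (Fin n) (Fin n) K}
    (hZN : Zᵀ * N⁻¹ * Z = 1) (hLM : LMᵀ * LM = M⁻¹) (hUA : UAᵀ * UA = 1)
    (hgsvd : LM * A = UA * S * Z⁻¹) (p : K[X]) (b : Fin m → K) :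
    aeval (N * Aᵀ * M⁻¹ * A) p *ᵥ ((N * Aᵀ * M⁻¹) *ᵥ b) =
      ∑ i : Fin r, (σ i ^ 2 * p.eval (σ i ^ 2) *
        ((UAᵀ (Fin.castLE hrm i) ⬝ᵥ (LM *ᵥ b)) / σ i)) • Zᵀ (Fin.castLE hrn i) := by
  have hZ : IsUnit Z.det := isUnit_det_of_left_inverse hZN
  rw [gsvd_adjoint_mul_eq hZN hLM hUA hgsvd, aeval_mul_mul_inv _ _ hZ,
    gsvd_adjoint_eq hZN hLM hgsvd]
  calc (Z * aeval (Sᵀ * S) p * Z⁻¹) *ᵥ ((Z * Sᵀ * UAᵀ * LM) *ᵥ b)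
      = Z *ᵥ (aeval (Sᵀ * S) p *ᵥ (Sᵀ *ᵥ (UAᵀ *ᵥ (LM *ᵥ b)))) := by
        simp only [mulVec_mulVec, Matrix.mul_assoc, nonsing_inv_mul_cancel_left _ _ hZ]
    _ = _ := by
        rw [aeval_transpose_mul_self_mulVec_transpose_mulVec hrm hrn hS, mulVec_sum]
        refine Finset.sum_congr rfl fun i _ => ?_
        rw [mulVec_smul, mulVec_single_one]
        congr 1
        rcases eq_or_ne (σ i) 0 with h | h
        · simp [h]
        · field_simp
          exact mul_comm _ _

end RectangularDiagonal

end Matrix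

theorem genGKB_SPR_filtered_expansion_general {m n : ℕ} (r k : ℕ)
    (hk1 : 1 ≤ k) (hrm : r ≤ m) (hrn : r ≤ n)
    (A : Matrix (Fin m) (Fin n) ℝ) (b : Fin m → ℝ)
    (M : Matrix (Fin m) (Fin m) ℝ) (N : Matrix (Fin n) (Fin n) ℝ)
    (LM : Matrix (Fin m) (Fin m) ℝ)
    (hLMM : LMᵀ * LM = M⁻¹)
    (UA : Matrix (Fin m) (Fin m) ℝ) (hUA : UAᵀ * UA = 1)
    (Z : Matrix (Fin n) (Fin n) ℝ) (hZN : Zᵀ * N⁻¹ * Z = 1)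
    (σ : ℕ → ℝ)
    (SigA : Matrix (Fin m) (Fin n) ℝ)
    (hSigA : ∀ (i : Fin m) (j : Fin n),
      SigA i j = if (i : ℕ) = (j : ℕ) ∧ (i : ℕ) < r then σ (i : ℕ) else 0)
    (hgsvd : LM * A = UA * SigA * Z⁻¹)
    -- gen-GKB data: bidiagonal B with positive α, β, bases U, V and next vector v_{k+1}
    (α β : ℕ → ℝ)
    (U : Matrix (Fin m) (Fin (k + 1)) ℝ) (V : Matrix (Fin n) (Fin k) ℝ)
    (vk1 : Fin n → ℝ)
    (B : Matrix (Fin (k + 1)) (Fin k) ℝ)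
    (hB : ∀ (i : Fin (k + 1)) (j : Fin k),
      B i j = if (i : ℕ) = (j : ℕ) then α ((j : ℕ) + 1)
        else if (i : ℕ) = (j : ℕ) + 1 then β ((j : ℕ) + 2) else 0)
    (e₁ : Fin (k + 1) → ℝ) (he₁ : e₁ = fun j : Fin (k + 1) => if (j : ℕ) = 0 then 1 else 0)
    (hb : β 1 • (U *ᵥ e₁) = b)
    (hAV : A * V = U * B)
    (hNAU : N * Aᵀ * M⁻¹ * U =
      V * Bᵀ + α (k + 1) • Matrix.vecMulVec vk1
        (fun j : Fin (k + 1) => if (j : ℕ) = k then (1 : ℝ) else 0))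
    -- the eigenvalues (θ_j^{(k)})² of B_kᵀ B_k, distinct and positive
    (θ : Fin k → ℝ)
    (hθpos : ∀ j : Fin k, 0 < θ j ^ 2)
    (hchar : (Bᵀ * B).charpoly = ∏ j : Fin k, (Polynomial.X - Polynomial.C (θ j ^ 2))) :
    V *ᵥ ((Bᵀ * B)⁻¹ *ᵥ (Bᵀ *ᵥ (β 1 • e₁))) =
      ∑ i : Fin r,
        ((1 - ∏ j : Fin k, ((θ j ^ 2 - σ (i : ℕ) ^ 2) / θ j ^ 2)) *
          ((UAᵀ (Fin.castLE hrm i) ⬝ᵥ (LM *ᵥ b)) / σ (i : ℕ))) •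
          Zᵀ (Fin.castLE hrn i) := by
  subst he₁
  have hBidiag : ∀ (i : Fin (k + 1)) (j : Fin k), (i : ℕ) ≠ j → (i : ℕ) ≠ j + 1 → B i j = 0 :=
    fun i j h₁ h₂ => by rw [hB, if_neg h₁, if_neg h₂]
  rw [← smul_vecMulVec] at hNAU
  have hχ0 : (Bᵀ * B).charpoly.coeff 0 ≠ 0 := by
    rw [hchar, coeff_zero_eq_eval_zero, eval_prod]
    exact Finset.prod_ne_zero_iff.mpr fun j _ => by simpa using (hθpos j).ne'
  have hdeg : (invPoly (Bᵀ * B).charpoly).natDegree < k := by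
    simpa using natDegree_invPoly_lt (χ := (Bᵀ * B).charpoly)
      (by rw [charpoly_natDegree_eq_dim, Fintype.card_fin]; omega)
  rw [inv_eq_aeval_invPoly _ (aeval_self_charpoly _) hχ0,
    mulVec_aeval_mulVec_transpose_mulVec hBidiag hAV hNAU hk1 hb hdeg,
    aeval_gsvd_adjoint_mul_mulVec hrm hrn hSigA hZN hLMM hUA hgsvd]
  refine Finset.sum_congr rfl fun i _ => ?_
  rw [mul_eval_invPoly hχ0, hchar, eval_prod_X_sub_C_div_coeff_zero]

/-- Under the GSVD setup and the gen-GKB matrix relations through step `k`,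
if `B_kᵀ B_k` is invertible with distinct positive eigenvalues `(θ_j^{(k)})²`, then the
`k`-th subspace projection regularized solution `x_k = V_k (B_kᵀ B_k)⁻¹ B_kᵀ (β₁ e₁)`
has the filtered GSVD expansion
`x_k = Σ_{i=1}^{r} f_i^{(k)} ((u_{A,i}ᵀ L_M b)/σ_i) z_i`,
with filter factors `f_i^{(k)} = 1 − Π_{j=1}^{k} ((θ_j^{(k)})² − γ_i²)/(θ_j^{(k)})²`
and `γ_i = σ_i`. -/
theorem genGKB_SPR_filtered_expansion {m n : ℕ} (r k : ℕ)
    (hk1 : 1 ≤ k) (hrm : r ≤ m) (hrn : r ≤ n)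
    (A : Matrix (Fin m) (Fin n) ℝ) (b : Fin m → ℝ)
    (M : Matrix (Fin m) (Fin m) ℝ) (N : Matrix (Fin n) (Fin n) ℝ)
    (hM : M.PosDef) (hN : N.PosDef)
    (LM : Matrix (Fin m) (Fin m) ℝ) (LN : Matrix (Fin n) (Fin n) ℝ)
    (hLM : IsUnit LM.det) (hLN : IsUnit LN.det)
    (hLMM : LMᵀ * LM = M⁻¹) (hLNN : LNᵀ * LN = N⁻¹)
    (UA : Matrix (Fin m) (Fin m) ℝ) (hUA : UAᵀ * UA = 1)
    (Z : Matrix (Fin n) (Fin n) ℝ) (hZ : IsUnit Z.det) (hZN : Zᵀ * N⁻¹ * Z = 1)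
    (σ : ℕ → ℝ)
    (hσpos : ∀ i, i < r → 0 < σ i) (hσlt1 : ∀ i, i < r → σ i < 1)
    (hσord : ∀ i j, i ≤ j → j < r → σ j ≤ σ i)
    (SigA : Matrix (Fin m) (Fin n) ℝ)
    (hSigA : ∀ (i : Fin m) (j : Fin n),
      SigA i j = if (i : ℕ) = (j : ℕ) ∧ (i : ℕ) < r then σ (i : ℕ) else 0)
    (hgsvd : LM * A = UA * SigA * Z⁻¹)
    -- gen-GKB data: bidiagonal B with positive α, β, bases U, V and next vector v_{k+1}
    (α β : ℕ → ℝ)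
    (hαpos : ∀ i, 1 ≤ i → i ≤ k + 1 → 0 < α i)
    (hβpos : ∀ i, 1 ≤ i → i ≤ k + 1 → 0 < β i)
    (U : Matrix (Fin m) (Fin (k + 1)) ℝ) (V : Matrix (Fin n) (Fin k) ℝ)
    (vk1 : Fin n → ℝ)
    (B : Matrix (Fin (k + 1)) (Fin k) ℝ)
    (hB : ∀ (i : Fin (k + 1)) (j : Fin k),
      B i j = if (i : ℕ) = (j : ℕ) then α ((j : ℕ) + 1)
        else if (i : ℕ) = (j : ℕ) + 1 then β ((j : ℕ) + 2) else 0)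
    (e₁ : Fin (k + 1) → ℝ) (he₁ : e₁ = fun j : Fin (k + 1) => if (j : ℕ) = 0 then 1 else 0)
    (hb : β 1 • (U *ᵥ e₁) = b)
    (hAV : A * V = U * B)
    (hNAU : N * Aᵀ * M⁻¹ * U =
      V * Bᵀ + α (k + 1) • Matrix.vecMulVec vk1
        (fun j : Fin (k + 1) => if (j : ℕ) = k then (1 : ℝ) else 0))
    (hUorth : Uᵀ * M⁻¹ * U = 1)
    (hVorth : Vᵀ * N⁻¹ * V = 1)
    (hvk1orth : ∀ j : Fin k, vk1 ⬝ᵥ (N⁻¹ *ᵥ Vᵀ j) = 0)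
    -- the eigenvalues (θ_j^{(k)})² of B_kᵀ B_k, distinct and positive
    (θ : Fin k → ℝ)
    (hθpos : ∀ j : Fin k, 0 < θ j ^ 2)
    (hθdistinct : ∀ i j : Fin k, i < j → θ j ^ 2 < θ i ^ 2)
    (hBBunit : IsUnit (Bᵀ * B).det)
    (hchar : (Bᵀ * B).charpoly = ∏ j : Fin k, (Polynomial.X - Polynomial.C (θ j ^ 2))) :
    V *ᵥ ((Bᵀ * B)⁻¹ *ᵥ (Bᵀ *ᵥ (β 1 • e₁))) =
      ∑ i : Fin r,
        ((1 - ∏ j : Fin k, ((θ j ^ 2 - σ (i : ℕ) ^ 2) / θ j ^ 2)) *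
          ((UAᵀ (Fin.castLE hrm i) ⬝ᵥ (LM *ᵥ b)) / σ (i : ℕ))) •
          Zᵀ (Fin.castLE hrn i) :=
  genGKB_SPR_filtered_expansion_general r k hk1 hrm hrn A b M N LM hLMM UA hUA Z hZN σ SigA hSigA
    hgsvd α β U V vk1 B hB e₁ he₁ hb hAV hNAU θ hθpos hchar
end
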